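/- arXiv:2007.13104 — 2 statements merged into one kernel-verified Lean document; each statement's English description precedes it below -/
import Mathlib

section
/- Let λ > 4, 0 < α ≤ m(λ−4), let μ be a power bounded measure of order m on ℝⁿ, and let s_t be a bilinear Littlewood–Paley kernel with exponent α. Let ν be a complex Borel measure supported in a cube Q with center c_Q, and let g ∈ L^∞(μ). Then there is a constant C (independent of ν, g, Q) such that for every x ∈ ℝⁿ ∖ 2Q: g_λ^*(ν, g μ)(x) ≤ C ‖g‖_{L^∞(μ)} ‖ν‖ / |x − c_Q|^{m}. -/
open MeasureTheory Metric Set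
open scoped ENNReal NNReal BigOperators

noncomputable section

/-- We work on `ℝⁿ` with the euclidean metric. -/
abbrev Rn (n : ℕ) := EuclideanSpace ℝ (Fin n)

variable {n : ℕ}

/-- An axis-parallel cube in `ℝⁿ`, given by its center and (positive) side length. -/
structure Cube (n : ℕ) where
  center : Rn n
  side : ℝ
  side_pos : 0 < side

/-- The concentric dilation `aQ` of a cube `Q`, as a subset of `ℝⁿ`. -/
def Cube.dilate (Q : Cube n) (a : ℝ) : Set (Rn n) :=
  {x | ∀ i, |x i - Q.center i| ≤ a * Q.side / 2}

/-- The cube `Q` as a subset of `ℝⁿ`. -/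
def Cube.carrier (Q : Cube n) : Set (Rn n) := Q.dilate 1

/-- `μ` is power bounded of order `m` with constant `Cμ`: `μ(B(x,r)) ≤ Cμ rᵐ`. -/
def IsPowerBounded (μ : Measure (Rn n)) (m Cμ : ℝ) : Prop :=
  ∀ x r, 0 < r → μ (ball x r) ≤ ENNReal.ofReal (Cμ * r ^ m)

/-- `Q` is an `(a,b)`-doubling cube for `μ`: `μ(aQ) ≤ b μ(Q)`. -/
def IsDoubling (μ : Measure (Rn n)) (Q : Cube n) (a b : ℝ) : Prop :=
  μ (Q.dilate a) ≤ ENNReal.ofReal b * μ Q.carrier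

/-- `Q` has `c`-small boundary with respect to `μ`. -/
def HasSmallBoundary (μ : Measure (Rn n)) (Q : Cube n) (c : ℝ) : Prop :=
  ∀ ξ : ℝ, 0 < ξ →
    μ {x ∈ Q.dilate 2 | infDist x (frontier Q.carrier) ≤ ξ * Q.side}
      ≤ ENNReal.ofReal (c * ξ) * μ (Q.dilate 2)

/-- A `κ`-linear Littlewood–Paley kernel with exponent `α` and constant `A`. -/
structure IsLPKernel (κ : ℕ) (m α A : ℝ)
    (s : ℝ → Rn n → (Fin κ → Rn n) → ℂ) : Prop where
  size : ∀ t x y, 0 < t →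
    ‖s t x y‖ ≤ A * t ^ ((κ : ℝ) * α) * ∏ i, (t + dist x (y i)) ^ (-(m + α))
  holder_x : ∀ t x x' y, 0 < t → dist x x' < t / 2 →
    ‖s t x y - s t x' y‖ ≤
      A * t ^ (((κ : ℝ) - 1) * α) * dist x x' ^ α * ∏ i, (t + dist x (y i)) ^ (-(m + α))
  holder_y : ∀ t x y (i : Fin κ) y', 0 < t → dist (y i) y' < t / 2 →
    ‖s t x y - s t x (Function.update y i y')‖ ≤
      A * t ^ (((κ : ℝ) - 1) * α) * dist (y i) y' ^ α * ∏ j, (t + dist x (y j)) ^ (-(m + α))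

/-- A bilinear Littlewood–Paley kernel with exponent `α` and constant `A`. -/
structure IsLPKernel2 (m α A : ℝ) (s : ℝ → Rn n → Rn n → Rn n → ℂ) : Prop where
  size : ∀ t x y₁ y₂, 0 < t →
    ‖s t x y₁ y₂‖ ≤
      A * t ^ (2 * α) * (t + dist x y₁) ^ (-(m + α)) * (t + dist x y₂) ^ (-(m + α))
  holder_x : ∀ t x x' y₁ y₂, 0 < t → dist x x' < t / 2 →
    ‖s t x y₁ y₂ - s t x' y₁ y₂‖ ≤
      A * t ^ α * dist x x' ^ α * (t + dist x y₁) ^ (-(m + α)) * (t + dist x y₂) ^ (-(m + α))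
  holder_y1 : ∀ t x y₁ y₁' y₂, 0 < t → dist y₁ y₁' < t / 2 →
    ‖s t x y₁ y₂ - s t x y₁' y₂‖ ≤
      A * t ^ α * dist y₁ y₁' ^ α * (t + dist x y₁) ^ (-(m + α)) * (t + dist x y₂) ^ (-(m + α))
  holder_y2 : ∀ t x y₁ y₂ y₂', 0 < t → dist y₂ y₂' < t / 2 →
    ‖s t x y₁ y₂ - s t x y₁ y₂'‖ ≤
      A * t ^ α * dist y₂ y₂' ^ α * (t + dist x y₁) ^ (-(m + α)) * (t + dist x y₂) ^ (-(m + α))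

/-- `Θ_t^μ(f₁,…,f_κ)(y)` for a `κ`-linear kernel and functions `f i`. -/
def Theta (μ : Measure (Rn n)) {κ : ℕ} (s : ℝ → Rn n → (Fin κ → Rn n) → ℂ)
    (f : Fin κ → Rn n → ℂ) (t : ℝ) (y : Rn n) : ℂ :=
  ∫ z : Fin κ → Rn n, s t y z * ∏ i, f i (z i) ∂Measure.pi (fun _ => μ)

/-- `Θ_t^μ(f₁,f₂)(y)` for a bilinear kernel. -/
def Theta2 (μ : Measure (Rn n)) (s : ℝ → Rn n → Rn n → Rn n → ℂ)
    (f₁ f₂ : Rn n → ℂ) (t : ℝ) (y : Rn n) : ℂ :=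
  ∫ z₁, (∫ z₂, s t y z₁ z₂ * f₁ z₁ * f₂ z₂ ∂μ) ∂μ

/-- The inner `y`-integral `∫ (t/(t+|x-y|))^{mλ} |Θ_t(y)|² dμ(y)` of a `g`-function. -/
def gKer (μ : Measure (Rn n)) (m lam : ℝ) (Θ : ℝ → Rn n → ℂ) (t : ℝ) (x : Rn n) : ℝ≥0∞ :=
  ∫⁻ y, ENNReal.ofReal ((t / (t + dist x y)) ^ (m * lam)) * (‖Θ t y‖₊ : ℝ≥0∞) ^ 2 ∂μ

/-- `(∫_I ∫ (t/(t+|x-y|))^{mλ} |Θ_t(y)|² dμ(y) dt/t^{m+1})^{1/2}`. -/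
def gAux (μ : Measure (Rn n)) (m lam : ℝ) (Θ : ℝ → Rn n → ℂ) (I : Set ℝ) (x : Rn n) : ℝ≥0∞ :=
  (∫⁻ t in I, gKer μ m lam Θ t x / ENNReal.ofReal (t ^ (m + 1))) ^ ((1 : ℝ) / 2)

/-- The `κ`-linear Littlewood–Paley–Stein function `g^*_{λ,μ}(f⃗)(x)`. -/
def gstar (μ : Measure (Rn n)) {κ : ℕ} (m lam : ℝ) (s : ℝ → Rn n → (Fin κ → Rn n) → ℂ)
    (f : Fin κ → Rn n → ℂ) (x : Rn n) : ℝ≥0∞ :=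
  gAux μ m lam (Theta μ s f) (Ioi 0) x

/-- The local version `g^*_{λ,μ,Q}`: the `t`-integral is restricted to `0 < t < ℓ(Q)`. -/
def gstarLoc (μ : Measure (Rn n)) {κ : ℕ} (m lam : ℝ) (s : ℝ → Rn n → (Fin κ → Rn n) → ℂ)
    (f : Fin κ → Rn n → ℂ) (Q : Cube n) (x : Rn n) : ℝ≥0∞ :=
  gAux μ m lam (Theta μ s f) (Ioo 0 Q.side) x

/-- The bilinear `g^*_{λ,μ}(f₁,f₂)(x)`. -/
def gstar2 (μ : Measure (Rn n)) (m lam : ℝ) (s : ℝ → Rn n → Rn n → Rn n → ℂ)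
    (f₁ f₂ : Rn n → ℂ) (x : Rn n) : ℝ≥0∞ :=
  gAux μ m lam (Theta2 μ s f₁ f₂) (Ioi 0) x

/-- The `t₀`-truncated bilinear `g^*_{λ,μ,t₀}(f₁,f₂)(x)`. -/
def gstar2T (μ : Measure (Rn n)) (m lam : ℝ) (s : ℝ → Rn n → Rn n → Rn n → ℂ)
    (f₁ f₂ : Rn n → ℂ) (t₀ : ℝ) (x : Rn n) : ℝ≥0∞ :=
  gAux μ m lam (Theta2 μ s f₁ f₂) (Ioi t₀) x

namespace CM

variable {X : Type*} [MeasurableSpace X]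

/-- The four nonnegative parts of a complex measure:
`ν = (parts ν 0 - parts ν 1) + i (parts ν 2 - parts ν 3)`. -/
def parts (ν : ComplexMeasure X) : Fin 4 → Measure X :=
  ![(ComplexMeasure.re ν).toJordanDecomposition.posPart,
    (ComplexMeasure.re ν).toJordanDecomposition.negPart,
    (ComplexMeasure.im ν).toJordanDecomposition.posPart,
    (ComplexMeasure.im ν).toJordanDecomposition.negPart]

/-- The coefficients matching `parts`. -/
def coef : Fin 4 → ℂ := ![1, -1, Complex.I, -Complex.I]

/-- The variation measure of a complex measure (sum of the total variations of the real and
imaginary parts; comparable to the usual total variation `|ν|`). -/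
def var (ν : ComplexMeasure X) : Measure X :=
  (ComplexMeasure.re ν).totalVariation + (ComplexMeasure.im ν).totalVariation

/-- The total variation norm `‖ν‖` of a complex measure. -/
def norm (ν : ComplexMeasure X) : ℝ := (var ν Set.univ).toReal

/-- Integral of a (complex-valued) function against a signed measure. -/
def sint (ρ : SignedMeasure X) (f : X → ℂ) : ℂ :=
  ∫ x, f x ∂ρ.toJordanDecomposition.posPart - ∫ x, f x ∂ρ.toJordanDecomposition.negPart

/-- Integral of a function against a complex measure. -/
def cint (ν : ComplexMeasure X) (f : X → ℂ) : ℂ :=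
  sint (ComplexMeasure.re ν) f + Complex.I * sint (ComplexMeasure.im ν) f

end CM

/-- `Θ_t(ν₁,…,ν_κ)(y)`: the `κ`-linear form applied to complex measures, written via the
decomposition of each `ν i` into its four nonnegative parts. -/
def ThetaM {κ : ℕ} (s : ℝ → Rn n → (Fin κ → Rn n) → ℂ)
    (ν : Fin κ → ComplexMeasure (Rn n)) (t : ℝ) (y : Rn n) : ℂ :=
  ∑ ε : Fin κ → Fin 4, (∏ i, CM.coef (ε i)) *
    ∫ z : Fin κ → Rn n, s t y z ∂Measure.pi (fun i => CM.parts (ν i) (ε i))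

/-- `g^*_λ(ν₁,…,ν_κ)(x)` for complex measures. -/
def gstarM (μ : Measure (Rn n)) {κ : ℕ} (m lam : ℝ) (s : ℝ → Rn n → (Fin κ → Rn n) → ℂ)
    (ν : Fin κ → ComplexMeasure (Rn n)) (x : Rn n) : ℝ≥0∞ :=
  gAux μ m lam (ThetaM s ν) (Ioi 0) x

/-- `Θ_t(ν₁,ν₂)(y)` for complex measures and a bilinear kernel. -/
def Theta2M (s : ℝ → Rn n → Rn n → Rn n → ℂ) (ν₁ ν₂ : ComplexMeasure (Rn n))
    (t : ℝ) (y : Rn n) : ℂ :=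
  CM.cint ν₁ (fun z₁ => CM.cint ν₂ (fun z₂ => s t y z₁ z₂))

/-- Bilinear `g_λ^*(ν₁,ν₂)(x)` for complex measures. -/
def gstar2M (μ : Measure (Rn n)) (m lam : ℝ) (s : ℝ → Rn n → Rn n → Rn n → ℂ)
    (ν₁ ν₂ : ComplexMeasure (Rn n)) (x : Rn n) : ℝ≥0∞ :=
  gAux μ m lam (Theta2M s ν₁ ν₂) (Ioi 0) x

/-- `Θ_t(ν, gμ)(y)`: mixed bilinear form with a complex measure in the first slot and the
measure `g·μ` in the second slot. -/
def Theta2Mix (μ : Measure (Rn n)) (s : ℝ → Rn n → Rn n → Rn n → ℂ)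
    (ν : ComplexMeasure (Rn n)) (g : Rn n → ℂ) (t : ℝ) (y : Rn n) : ℂ :=
  CM.cint ν (fun z₁ => ∫ z₂, s t y z₁ z₂ * g z₂ ∂μ)

/-- `g_λ^*(ν, gμ)(x)`. -/
def gstar2Mix (μ : Measure (Rn n)) (m lam : ℝ) (s : ℝ → Rn n → Rn n → Rn n → ℂ)
    (ν : ComplexMeasure (Rn n)) (g : Rn n → ℂ) (x : Rn n) : ℝ≥0∞ :=
  gAux μ m lam (Theta2Mix μ s ν g) (Ioi 0) x

/-- The modified Hardy–Littlewood maximal operator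
`M_μ f(x) = sup_{Q ∋ x} μ(2Q)⁻¹ ∫_Q |f| dμ`. -/
def Mmu (μ : Measure (Rn n)) (f : Rn n → ℂ) (x : Rn n) : ℝ≥0∞ :=
  ⨆ (Q : Cube n) (_ : x ∈ Q.carrier),
    (∫⁻ z in Q.carrier, (‖f z‖₊ : ℝ≥0∞) ∂μ) / μ (Q.dilate 2)

/-- A dyadic cube `2^k([0,1)ⁿ + pos)` of the standard dyadic lattice `𝒟` of `ℝⁿ`. -/
structure DyadicCube (n : ℕ) where
  k : ℤ
  pos : Fin n → ℤ

namespace DyadicCube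

/-- The side length `ℓ(Q) = 2^k`. -/
def side (Q : DyadicCube n) : ℝ := (2 : ℝ) ^ Q.k

/-- The (half-open) dyadic cube as a subset of `ℝⁿ`. -/
def carrier (Q : DyadicCube n) : Set (Rn n) :=
  {x | ∀ i, (Q.pos i : ℝ) * Q.side ≤ x i ∧ x i < ((Q.pos i : ℝ) + 1) * Q.side}

/-- The closed dyadic cube as a subset of `ℝⁿ`. -/
def closedCarrier (Q : DyadicCube n) : Set (Rn n) :=
  {x | ∀ i, (Q.pos i : ℝ) * Q.side ≤ x i ∧ x i ≤ ((Q.pos i : ℝ) + 1) * Q.side}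

/-- The center of a dyadic cube. -/
def center (Q : DyadicCube n) : Rn n := WithLp.toLp 2 (fun i => ((Q.pos i : ℝ) + 1 / 2) * Q.side)

/-- The concentric dilation `aQ` of a dyadic cube, as a (closed) subset of `ℝⁿ`. -/
def dilate (Q : DyadicCube n) (a : ℝ) : Set (Rn n) :=
  {x | ∀ i, |x i - Q.center i| ≤ a * Q.side / 2}

/-- The dyadic child of `Q` selected by `ε`. -/
def child (Q : DyadicCube n) (ε : Fin n → Bool) : DyadicCube n :=
  ⟨Q.k - 1, fun i => 2 * Q.pos i + (if ε i then 1 else 0)⟩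

end DyadicCube

/-- The unique dyadic cube of generation `k` (side `2^k`) containing `x`. -/
def dyadicAt (k : ℤ) (x : Rn n) : DyadicCube n := ⟨k, fun i => ⌊x i / (2 : ℝ) ^ k⌋⟩

/-- The average `⟨f⟩_Q = μ(Q)⁻¹ ∫_Q f dμ` (zero if `μ(Q)` is `0` or `∞`). -/
def avg (μ : Measure (Rn n)) (Q : DyadicCube n) (f : Rn n → ℂ) : ℂ :=
  (μ Q.carrier).toReal⁻¹ • ∫ z in Q.carrier, f z ∂μ

/-- The martingale difference `Δ_Q f = ∑_{Q' ∈ ch(Q)} (⟨f⟩_{Q'} - ⟨f⟩_Q) 1_{Q'}`. -/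
def deltaQ (μ : Measure (Rn n)) (Q : DyadicCube n) (f : Rn n → ℂ) (x : Rn n) : ℂ :=
  ∑ ε : Fin n → Bool,
    Set.indicator (Q.child ε).carrier (fun _ => avg μ (Q.child ε) f - avg μ Q f) x

/-- The averaging operator `E_{2^k} f = ∑_{Q ∈ 𝒟, ℓ(Q) = 2^k} ⟨f⟩_Q 1_Q`. -/
def Ek (μ : Measure (Rn n)) (k : ℤ) (f : Rn n → ℂ) (x : Rn n) : ℂ :=
  avg μ (dyadicAt k x) f

/-- The dyadic maximal operator `M_𝒟 f(x) = sup_{Q ∈ 𝒟, Q ∋ x} μ(Q)⁻¹ ∫_Q |f| dμ`. -/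
def Mdyadic (μ : Measure (Rn n)) (f : Rn n → ℂ) (x : Rn n) : ℝ≥0∞ :=
  ⨆ (Q : DyadicCube n) (_ : x ∈ Q.carrier),
    (∫⁻ z in Q.carrier, (‖f z‖₊ : ℝ≥0∞) ∂μ) / μ Q.carrier

/-- The maximal operator `M_m g(x) = sup_{ρ>0} ρ^{-m} ∫_{B(x,ρ)} g dμ`. -/
def Mm (μ : Measure (Rn n)) (m : ℝ) (g : Rn n → ℝ≥0∞) (x : Rn n) : ℝ≥0∞ :=
  ⨆ (ρ : ℝ) (_ : 0 < ρ), (∫⁻ z in ball x ρ, g z ∂μ) / ENNReal.ofReal (ρ ^ m)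

/-- The distance between two sets. -/
def setDist (S T : Set (Rn n)) : ℝ := (⨅ (x ∈ S) (y ∈ T), edist x y).toReal

/-- The long distance `D(Q,R) = ℓ(Q) + ℓ(R) + dist(Q,R)` between dyadic cubes. -/
def Dlong (Q R : DyadicCube n) : ℝ := Q.side + R.side + setDist Q.carrier R.carrier

/-- `δ(Q,R) = ℓ(Q)^{α/2} ℓ(R)^{α/2} / D(Q,R)^{m+α}`. -/
def deltaCoef (α m : ℝ) (Q R : DyadicCube n) : ℝ :=
  Q.side ^ (α / 2) * R.side ^ (α / 2) / Dlong Q R ^ (m + α)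

/-- The `L^p(μ)` norm of an `ℝ≥0∞`-valued function. -/
def lpNormE (μ : Measure (Rn n)) (p : ℝ) (g : Rn n → ℝ≥0∞) : ℝ≥0∞ :=
  (∫⁻ x, g x ^ p ∂μ) ^ (1 / p)
namespace PMG
open MeasureTheory Metric Set
open scoped ENNReal NNReal

lemma measurable_rpow_const (c : ℝ) : Measurable fun x : ℝ => x ^ c := by
  have heq : (fun x : ℝ => x ^ c) = fun x =>
      if x = 0 then (if c = 0 then 1 else 0)
      else (if x < 0 then Real.exp (Real.log x * c) * Real.cos (c * Real.pi)
            else Real.exp (Real.log x * c)) := by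
    funext x
    rcases lt_trichotomy x 0 with hx | hx | hx
    · rw [if_neg hx.ne, if_pos hx, Real.rpow_def_of_neg hx]
    · subst hx
      simp only [if_pos rfl]
      rcases eq_or_ne c 0 with hc | hc
      · simp [hc]
      · simp [hc, Real.zero_rpow hc]
    · rw [if_neg hx.ne', if_neg (not_lt.mpr hx.le), Real.rpow_def_of_pos hx]
  rw [heq]
  refine Measurable.ite (measurableSet_eq_fun measurable_id measurable_const)
    measurable_const ?_
  refine Measurable.ite (measurableSet_lt measurable_id measurable_const) ?_ ?_
  · exact (Real.measurable_exp.comp (Real.measurable_log.mul_const c)).mul_const _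
  · exact Real.measurable_exp.comp (Real.measurable_log.mul_const c)

lemma _root_.Measurable.rpow_const' {β : Type*} [MeasurableSpace β] {f : β → ℝ}
    (hf : Measurable f) (c : ℝ) : Measurable fun x => f x ^ c :=
  (measurable_rpow_const c).comp hf

end PMG
namespace PMG

open MeasureTheory Metric Set
open scoped ENNReal NNReal

variable {n : ℕ}

lemma measurable_rpow_of_pos {β : Type*} [MeasurableSpace β] {f : β → ℝ}
    (hf : Measurable f) (hpos : ∀ x, 0 < f x) (c : ℝ) :
    Measurable fun x => f x ^ c := by
  have : (fun x => f x ^ c) = fun x => Real.exp (Real.log (f x) * c) :=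
    funext fun x => Real.rpow_def_of_pos (hpos x) c
  rw [this]
  exact Real.measurable_exp.comp ((Real.measurable_log.comp hf).mul_const c)

lemma orp {t : ℝ} (ht : 0 < t) (a b : ℝ) :
    ENNReal.ofReal (t ^ a) * ENNReal.ofReal (t ^ b) = ENNReal.ofReal (t ^ (a + b)) := by
  rw [← ENNReal.ofReal_mul (Real.rpow_nonneg ht.le a), ← Real.rpow_add ht]

lemma inv_ofReal_rpow {t : ℝ} (ht : 0 < t) (c : ℝ) :
    (ENNReal.ofReal (t ^ c))⁻¹ = ENNReal.ofReal (t ^ (-c)) := by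
  rw [← ENNReal.ofReal_inv_of_pos (Real.rpow_pos_of_pos ht c), ← Real.rpow_neg ht.le]

lemma sigmaFinite_of_powerBounded (μ : Measure (Rn n)) (m Cμ : ℝ)
    (hμ : IsPowerBounded μ m Cμ) : SigmaFinite μ := by
  refine ⟨⟨⟨fun k => ball 0 (k + 1), fun _ => trivial, fun k => ?_, ?_⟩⟩⟩
  · exact lt_of_le_of_lt (hμ 0 (k + 1) (by positivity)) ENNReal.ofReal_lt_top
  · apply Set.eq_univ_of_forall
    intro x
    obtain ⟨k, hk⟩ := exists_nat_gt (dist x 0)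
    exact Set.mem_iUnion.mpr ⟨k, by simpa [mem_ball] using hk.trans (by linarith)⟩

end PMG
namespace PMG
open MeasureTheory Metric Set
open scoped ENNReal NNReal
variable {n : ℕ}

lemma annuli_real_calc {k : ℕ} {t m b Cμ : ℝ} (ht : 0 < t) :
    ((2:ℝ)^k * t)^(-b) * (Cμ * ((2:ℝ)^(k+1) * t)^m)
      = (Cμ * 2^m * t^(m-b)) * ((2:ℝ)^(m-b))^k := by
  have h2 : (0:ℝ) < 2 := two_pos
  rw [Real.mul_rpow (by positivity) ht.le, Real.mul_rpow (by positivity) ht.le,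
    ← Real.rpow_natCast (2:ℝ) k, ← Real.rpow_natCast (2:ℝ) (k+1),
    ← Real.rpow_natCast ((2:ℝ)^(m-b)) k,
    ← Real.rpow_mul h2.le, ← Real.rpow_mul h2.le, ← Real.rpow_mul h2.le]
  push_cast
  rw [show t^(m-b) = t^m * t^(-b) by rw [← Real.rpow_add ht]; ring_nf,
    show ((k:ℝ)+1)*m = (k:ℝ)*m + m by ring, Real.rpow_add h2,
    show ((k:ℝ))*(-b) = -((k:ℝ)*b) by ring,
    show (m-b)*(k:ℝ) = (k:ℝ)*m - (k:ℝ)*b by ring, Real.rpow_sub h2, Real.rpow_neg h2.le]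
  field_simp

lemma tail_bound (μ : Measure (Rn n)) {m Cμ : ℝ} (hμ : IsPowerBounded μ m Cμ)
    (hm : 0 < m) (hC : 0 ≤ Cμ) {b : ℝ} (hb : m < b) :
    ∃ c : ℝ≥0∞, c ≠ ∞ ∧ ∀ (z : Rn n) {t : ℝ}, 0 < t →
      ∫⁻ y, ENNReal.ofReal ((t + dist y z) ^ (-b)) ∂μ ≤ c * ENNReal.ofReal (t ^ (m - b)) := by
  set r : ℝ≥0∞ := ENNReal.ofReal ((2:ℝ) ^ (m - b)) with hr
  have hrlt : r < 1 := by
    rw [hr]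
    exact ENNReal.ofReal_lt_one.mpr
      (Real.rpow_lt_one_of_one_lt_of_neg one_lt_two (by linarith))
  have hinv : (1 - r)⁻¹ ≠ ∞ := by
    rw [Ne, ENNReal.inv_eq_top, tsub_eq_zero_iff_le]
    exact fun h => absurd (lt_of_le_of_lt h hrlt) (lt_irrefl _)
  refine ⟨ENNReal.ofReal Cμ + ENNReal.ofReal Cμ * ENNReal.ofReal ((2:ℝ)^m) * (1 - r)⁻¹,
    by simp [ENNReal.add_ne_top, ENNReal.mul_ne_top, hinv], ?_⟩
  intro z t ht
  have hcomm : ∀ y : Rn n, dist y z = dist z y := fun y => dist_comm y z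
  rw [← lintegral_add_compl (fun y => ENNReal.ofReal ((t + dist y z) ^ (-b)))
    (measurableSet_ball (x := z) (ε := t))]
  have h1 : ∫⁻ y in ball z t, ENNReal.ofReal ((t + dist y z) ^ (-b)) ∂μ
      ≤ ENNReal.ofReal Cμ * ENNReal.ofReal (t ^ (m - b)) := by
    calc ∫⁻ y in ball z t, ENNReal.ofReal ((t + dist y z) ^ (-b)) ∂μ
        ≤ ∫⁻ _ in ball z t, ENNReal.ofReal (t ^ (-b)) ∂μ := by
          refine lintegral_mono fun y => ENNReal.ofReal_le_ofReal ?_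
          exact Real.rpow_le_rpow_of_nonpos ht (by linarith [dist_nonneg (x := y) (y := z)])
            (by linarith)
      _ = ENNReal.ofReal (t ^ (-b)) * μ (ball z t) := by
          rw [setLIntegral_const]
      _ ≤ ENNReal.ofReal (t ^ (-b)) * ENNReal.ofReal (Cμ * t ^ m) :=
          mul_le_mul_right (hμ z t ht) _
      _ = ENNReal.ofReal Cμ * ENNReal.ofReal (t ^ (m - b)) := by
          rw [ENNReal.ofReal_mul hC, show m - b = m + (-b) by ring, ← orp ht]
          ring
  have hsub : (ball z t)ᶜ ⊆ ⋃ k : ℕ, (ball z ((2:ℝ)^(k+1) * t) \ ball z ((2:ℝ)^k * t)) := by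
    intro y hy
    simp only [mem_compl_iff, mem_ball, not_lt] at hy
    have hex : ∃ k : ℕ, dist y z < 2^(k+1) * t := by
      obtain ⟨k, hk⟩ := exists_nat_gt (dist y z / t)
      refine ⟨k, ?_⟩
      have h2 : (k:ℝ) < 2^(k+1) := by
        calc (k:ℝ) < 2^k := by exact_mod_cast Nat.lt_two_pow_self
        _ ≤ 2^(k+1) := by
          rw [pow_succ]
          nlinarith [pow_pos (two_pos (α := ℝ)) k]
      have := (div_lt_iff₀ ht).mp hk
      nlinarith
    set k := Nat.find hex with hkdef
    have hk1 : dist y z < 2^(k+1) * t := Nat.find_spec hex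
    have hk0 : (2:ℝ)^k * t ≤ dist y z := by
      match hk : k with
      | 0 => simpa using hy
      | j + 1 =>
        have hmin := Nat.find_min hex (m := j) (by omega)
        push_neg at hmin
        simpa using hmin
    exact mem_iUnion.mpr ⟨k, by
      simp only [mem_diff, mem_ball, not_lt]
      exact ⟨hk1, hk0⟩⟩
  have h2 : ∫⁻ y in (ball z t)ᶜ, ENNReal.ofReal ((t + dist y z) ^ (-b)) ∂μ
      ≤ ENNReal.ofReal Cμ * ENNReal.ofReal ((2:ℝ)^m) * (1 - r)⁻¹ * ENNReal.ofReal (t^(m-b)) := by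
    calc ∫⁻ y in (ball z t)ᶜ, ENNReal.ofReal ((t + dist y z) ^ (-b)) ∂μ
        ≤ ∫⁻ y in ⋃ k : ℕ, (ball z ((2:ℝ)^(k+1) * t) \ ball z ((2:ℝ)^k * t)),
            ENNReal.ofReal ((t + dist y z) ^ (-b)) ∂μ := lintegral_mono_set hsub
      _ ≤ ∑' k : ℕ, ∫⁻ y in (ball z ((2:ℝ)^(k+1) * t) \ ball z ((2:ℝ)^k * t)),
            ENNReal.ofReal ((t + dist y z) ^ (-b)) ∂μ := lintegral_iUnion_le _ _
      _ ≤ ∑' k : ℕ, (ENNReal.ofReal Cμ * ENNReal.ofReal ((2:ℝ)^m)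
            * ENNReal.ofReal (t^(m-b))) * r^k := by
          refine ENNReal.tsum_le_tsum fun k => ?_
          have hpos : (0:ℝ) < 2^k * t := by positivity
          calc ∫⁻ y in (ball z ((2:ℝ)^(k+1) * t) \ ball z ((2:ℝ)^k * t)),
                ENNReal.ofReal ((t + dist y z) ^ (-b)) ∂μ
              ≤ ∫⁻ _ in (ball z ((2:ℝ)^(k+1) * t) \ ball z ((2:ℝ)^k * t)),
                ENNReal.ofReal (((2:ℝ)^k * t) ^ (-b)) ∂μ := by
                refine lintegral_mono_ae ((ae_restrict_iff'
                  ((measurableSet_ball).diff measurableSet_ball)).mpr (ae_of_all _ ?_))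
                intro y hy
                simp only [mem_diff, mem_ball, not_lt] at hy
                refine ENNReal.ofReal_le_ofReal
                  (Real.rpow_le_rpow_of_nonpos hpos ?_ (by linarith))
                have := hy.2
                linarith [dist_nonneg (x := y) (y := z), ht]
            _ = ENNReal.ofReal (((2:ℝ)^k * t) ^ (-b))
                  * μ (ball z ((2:ℝ)^(k+1) * t) \ ball z ((2:ℝ)^k * t)) := setLIntegral_const _ _
            _ ≤ ENNReal.ofReal (((2:ℝ)^k * t) ^ (-b))
                  * ENNReal.ofReal (Cμ * ((2:ℝ)^(k+1) * t) ^ m) := by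
                refine mul_le_mul_right ?_ _
                exact le_trans (measure_mono (diff_subset)) (hμ z _ (by positivity))
            _ = (ENNReal.ofReal Cμ * ENNReal.ofReal ((2:ℝ)^m)
                  * ENNReal.ofReal (t^(m-b))) * r^k := by
                rw [← ENNReal.ofReal_mul (Real.rpow_nonneg hpos.le _), annuli_real_calc ht,
                  hr, ← ENNReal.ofReal_pow (by positivity),
                  ← ENNReal.ofReal_mul (by positivity), ← ENNReal.ofReal_mul (by positivity),
                  ← ENNReal.ofReal_mul (by positivity)]
      _ = ENNReal.ofReal Cμ * ENNReal.ofReal ((2:ℝ)^m) * (1 - r)⁻¹ * ENNReal.ofReal (t^(m-b)) := by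
          rw [ENNReal.tsum_mul_left, ENNReal.tsum_geometric]
          ring
  calc _ ≤ ENNReal.ofReal Cμ * ENNReal.ofReal (t ^ (m - b))
        + ENNReal.ofReal Cμ * ENNReal.ofReal ((2:ℝ)^m) * (1 - r)⁻¹ * ENNReal.ofReal (t^(m-b)) :=
        add_le_add h1 h2
    _ = _ := by ring

end PMG
namespace PMG
open MeasureTheory Metric Set
open scoped ENNReal NNReal

lemma t_integral_bound {p q : ℝ} (hp : 0 < p) (hpq : p < q) :
    ∃ c : ℝ≥0∞, c ≠ ∞ ∧ ∀ {D : ℝ}, 0 < D →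
      (∫⁻ t in Ioi (0:ℝ), ENNReal.ofReal (t ^ (p-1) * (t+D) ^ (-q)))
        ≤ c * ENNReal.ofReal (D ^ (p - q)) := by
  refine ⟨ENNReal.ofReal p⁻¹ + ENNReal.ofReal (q - p)⁻¹, by
    simp [ENNReal.add_ne_top], ?_⟩
  intro D hD
  have hsplit : (Ioi (0:ℝ)) = Ioc 0 D ∪ Ioi D := (Set.Ioc_union_Ioi_eq_Ioi hD.le).symm
  rw [hsplit, lintegral_union measurableSet_Ioi (Set.Ioc_disjoint_Ioi le_rfl)]
  have hA : (∫⁻ t in Ioc (0:ℝ) D, ENNReal.ofReal (t ^ (p-1) * (t+D) ^ (-q)))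
      ≤ ENNReal.ofReal p⁻¹ * ENNReal.ofReal (D ^ (p - q)) := by
    have step1 : (∫⁻ t in Ioc (0:ℝ) D, ENNReal.ofReal (t ^ (p-1) * (t+D) ^ (-q)))
        ≤ ∫⁻ t in Ioc (0:ℝ) D, ENNReal.ofReal (t ^ (p-1) * D ^ (-q)) := by
      refine lintegral_mono_ae ((ae_restrict_iff' measurableSet_Ioc).mpr (ae_of_all _ ?_))
      intro t htm
      refine ENNReal.ofReal_le_ofReal (mul_le_mul_of_nonneg_left ?_
        (Real.rpow_nonneg htm.1.le _))
      exact Real.rpow_le_rpow_of_nonpos hD (by linarith [htm.1]) (by linarith)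
    have hint : IntegrableOn (fun t : ℝ => t ^ (p-1) * D ^ (-q)) (Ioc 0 D) := by
      refine Integrable.mul_const ?_ _
      exact (by simpa [Set.uIoc_of_le hD.le] using
        (intervalIntegrable_iff.mp
          (intervalIntegral.intervalIntegrable_rpow' (a := 0) (b := D) (r := p-1)
            (by linarith))) : IntegrableOn (fun t : ℝ => t ^ (p-1)) (Ioc 0 D))
    have step2 : (∫⁻ t in Ioc (0:ℝ) D, ENNReal.ofReal (t ^ (p-1) * D ^ (-q)))
        = ENNReal.ofReal (∫ t in Ioc (0:ℝ) D, t ^ (p-1) * D ^ (-q)) := by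
      rw [MeasureTheory.ofReal_integral_eq_lintegral_ofReal hint
        ((ae_restrict_iff' measurableSet_Ioc).mpr (ae_of_all _ fun t htm => by
          have : (0:ℝ) < t := htm.1
          positivity))]
    have step3 : (∫ t in Ioc (0:ℝ) D, t ^ (p-1) * D ^ (-q)) = p⁻¹ * D ^ (p - q) := by
      rw [MeasureTheory.integral_mul_const, ← intervalIntegral.integral_of_le hD.le,
        integral_rpow (Or.inl (by linarith))]
      rw [Real.zero_rpow (by linarith), sub_add_cancel]
      rw [show p - q = p + (-q) by ring, Real.rpow_add hD]
      first
      | (field_simp; ring)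
      | field_simp
      | ring
    calc _ ≤ _ := step1
      _ = ENNReal.ofReal (p⁻¹ * D ^ (p - q)) := by rw [step2, step3]
      _ = _ := ENNReal.ofReal_mul (by positivity)
  have hB : (∫⁻ t in Ioi D, ENNReal.ofReal (t ^ (p-1) * (t+D) ^ (-q)))
      ≤ ENNReal.ofReal (q - p)⁻¹ * ENNReal.ofReal (D ^ (p - q)) := by
    have step1 : (∫⁻ t in Ioi D, ENNReal.ofReal (t ^ (p-1) * (t+D) ^ (-q)))
        ≤ ∫⁻ t in Ioi D, ENNReal.ofReal (t ^ (p-1-q)) := by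
      refine lintegral_mono_ae ((ae_restrict_iff' measurableSet_Ioi).mpr (ae_of_all _ ?_))
      intro t htm
      have ht0 : (0:ℝ) < t := hD.trans htm
      refine ENNReal.ofReal_le_ofReal ?_
      calc t ^ (p-1) * (t+D) ^ (-q) ≤ t ^ (p-1) * t ^ (-q) := by
            refine mul_le_mul_of_nonneg_left ?_ (Real.rpow_nonneg ht0.le _)
            exact Real.rpow_le_rpow_of_nonpos ht0 (by linarith) (by linarith)
        _ = t ^ (p-1-q) := by rw [← Real.rpow_add ht0]; ring_nf
    have hint : IntegrableOn (fun t : ℝ => t ^ (p-1-q)) (Ioi D) :=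
      integrableOn_Ioi_rpow_of_lt (by linarith) hD
    have step2 : (∫⁻ t in Ioi D, ENNReal.ofReal (t ^ (p-1-q)))
        = ENNReal.ofReal (∫ t in Ioi D, t ^ (p-1-q)) := by
      rw [MeasureTheory.ofReal_integral_eq_lintegral_ofReal hint
        ((ae_restrict_iff' measurableSet_Ioi).mpr (ae_of_all _ fun t htm => by
          have : (0:ℝ) < t := hD.trans htm
          positivity))]
    have step3 : (∫ t in Ioi D, t ^ (p-1-q)) = (q - p)⁻¹ * D ^ (p - q) := by
      rw [integral_Ioi_rpow_of_lt (by linarith) hD]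
      rw [show p - 1 - q + 1 = p - q by ring]
      have hne : p - q ≠ 0 := by linarith
      have hne2 : q - p ≠ 0 := by linarith
      field_simp
      ring
    calc _ ≤ _ := step1
      _ = ENNReal.ofReal ((q - p)⁻¹ * D ^ (p - q)) := by rw [step2, step3]
      _ = _ := ENNReal.ofReal_mul (inv_nonneg.mpr (by linarith))
  calc _ ≤ ENNReal.ofReal p⁻¹ * ENNReal.ofReal (D ^ (p - q))
        + ENNReal.ofReal (q - p)⁻¹ * ENNReal.ofReal (D ^ (p - q)) := add_le_add hA hB
    _ = _ := by ring

end PMG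
namespace PMG
open MeasureTheory Metric Set
open scoped ENNReal NNReal
variable {n : ℕ}

lemma coord_le_dist (x z : Rn n) (i : Fin n) : |x i - z i| ≤ dist x z := by
  rw [EuclideanSpace.dist_eq]
  have h1 : |x i - z i| = Real.sqrt (dist (x i) (z i) ^ 2) := by
    rw [Real.sqrt_sq_eq_abs, Real.dist_eq, abs_abs]
  rw [h1]
  apply Real.sqrt_le_sqrt
  exact Finset.single_le_sum (f := fun j => dist (x j) (z j) ^ 2)
    (fun j _ => sq_nonneg _) (Finset.mem_univ i)

lemma dist_le_sqrt_card (x z : Rn n) (c : ℝ) (hc : 0 ≤ c) (h : ∀ i, |x i - z i| ≤ c) :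
    dist x z ≤ Real.sqrt n * c := by
  rw [EuclideanSpace.dist_eq]
  have : ∑ i, dist (x i) (z i) ^ 2 ≤ (n : ℝ) * c ^ 2 := by
    calc ∑ i, dist (x i) (z i) ^ 2 ≤ ∑ _i : Fin n, c ^ 2 := by
          refine Finset.sum_le_sum fun i _ => ?_
          have := h i
          rw [Real.dist_eq]
          nlinarith [abs_nonneg (x i - z i)]
      _ = (n : ℝ) * c ^ 2 := by simp [Finset.sum_const, mul_comm]
  calc Real.sqrt (∑ i, dist (x i) (z i) ^ 2) ≤ Real.sqrt ((n:ℝ) * c ^ 2) :=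
        Real.sqrt_le_sqrt this
    _ = Real.sqrt n * c := by
        rw [Real.sqrt_mul (Nat.cast_nonneg n), Real.sqrt_sq hc]

lemma dist_lower (hn : 1 ≤ n) (Q : Cube n) {x z : Rn n} (hx : x ∉ Q.dilate 2)
    (hz : z ∈ Q.carrier) : dist x Q.center ≤ (2 * Real.sqrt n) * dist x z := by
  have hsn : (1:ℝ) ≤ Real.sqrt n := by
    rw [show (1:ℝ) = Real.sqrt 1 by simp]
    exact Real.sqrt_le_sqrt (by exact_mod_cast hn)
  simp only [Cube.dilate, mem_setOf_eq, not_forall, not_le] at hx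
  obtain ⟨i, hi⟩ := hx
  have hi' : Q.side < |x i - Q.center i| := by linarith [hi]
  have hzc : ∀ j, |z j - Q.center j| ≤ Q.side / 2 := by
    intro j
    have := hz j
    simpa [Cube.carrier, Cube.dilate] using this
  have hcoord : |x i - Q.center i| / 2 ≤ dist x z := by
    have h1 : |x i - z i| ≥ |x i - Q.center i| - |z i - Q.center i| := by
      have := abs_sub_abs_le_abs_sub (x i - Q.center i) (x i - z i)
      have h2 : |(x i - Q.center i) - (x i - z i)| = |z i - Q.center i| := by
        rw [show (x i - Q.center i) - (x i - z i) = z i - Q.center i by ring]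
      linarith [this, h2 ▸ this]
    have := coord_le_dist x z i
    have := hzc i
    linarith [hi', Q.side_pos]
  rcases le_or_gt (dist x Q.center) (Real.sqrt n * Q.side) with hcase | hcase
  · -- dist x c ≤ √n side ≤ 2√n (side/2) < 2√n dist x z  (dist x z > side/2)
    have h3 : Q.side / 2 ≤ dist x z := by
      have : Q.side / 2 ≤ |x i - Q.center i| / 2 := by linarith
      linarith
    calc dist x Q.center ≤ Real.sqrt n * Q.side := hcase
      _ = (2 * Real.sqrt n) * (Q.side / 2) := by ring
      _ ≤ (2 * Real.sqrt n) * dist x z := by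
          refine mul_le_mul_of_nonneg_left h3 (by positivity)
  · -- dist x c > √n side; dist z c ≤ √n side/2 ≤ dist x c / 2
    have hzc' : dist z Q.center ≤ Real.sqrt n * (Q.side / 2) :=
      dist_le_sqrt_card z Q.center (Q.side / 2) (by linarith [Q.side_pos]) hzc
    have h4 : dist x Q.center / 2 ≤ dist x z := by
      have htri : dist x Q.center ≤ dist x z + dist z Q.center := dist_triangle x z Q.center
      have : Real.sqrt n * (Q.side / 2) ≤ dist x Q.center / 2 := by nlinarith
      linarith
    calc dist x Q.center = 2 * (dist x Q.center / 2) := by ring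
      _ ≤ 2 * dist x z := by linarith
      _ ≤ (2 * Real.sqrt n) * dist x z := by nlinarith [dist_nonneg (x := x) (y := z)]

lemma norm_cint_le {X : Type*} [MeasurableSpace X] (ν : ComplexMeasure X) (f : X → ℂ) :
    (‖CM.cint ν f‖₊ : ℝ≥0∞) ≤ ∫⁻ z, ENNReal.ofReal ‖f z‖ ∂(CM.var ν) := by
  have hs : ∀ ρ : SignedMeasure X, (‖CM.sint ρ f‖₊ : ℝ≥0∞)
      ≤ ∫⁻ z, ENNReal.ofReal ‖f z‖ ∂ρ.totalVariation := by
    intro ρ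
    rw [SignedMeasure.totalVariation, lintegral_add_measure, ← enorm_eq_nnnorm, ← ofReal_norm]
    unfold CM.sint
    calc ENNReal.ofReal ‖(∫ x, f x ∂ρ.toJordanDecomposition.posPart)
          - ∫ x, f x ∂ρ.toJordanDecomposition.negPart‖
        ≤ ENNReal.ofReal (‖∫ x, f x ∂ρ.toJordanDecomposition.posPart‖
          + ‖∫ x, f x ∂ρ.toJordanDecomposition.negPart‖) :=
          ENNReal.ofReal_le_ofReal (norm_sub_le _ _)
      _ = ENNReal.ofReal ‖∫ x, f x ∂ρ.toJordanDecomposition.posPart‖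
          + ENNReal.ofReal ‖∫ x, f x ∂ρ.toJordanDecomposition.negPart‖ :=
          ENNReal.ofReal_add (norm_nonneg _) (norm_nonneg _)
      _ ≤ _ := by
          refine add_le_add ?_ ?_ <;>
          · refine le_trans (ENNReal.ofReal_le_ofReal
              (norm_integral_le_lintegral_norm _)) ?_
            exact ENNReal.ofReal_toReal_le
  unfold CM.cint CM.var
  rw [lintegral_add_measure, ← enorm_eq_nnnorm, ← ofReal_norm]
  calc ENNReal.ofReal ‖CM.sint (ComplexMeasure.re ν) f
        + Complex.I * CM.sint (ComplexMeasure.im ν) f‖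
      ≤ ENNReal.ofReal (‖CM.sint (ComplexMeasure.re ν) f‖
        + ‖Complex.I * CM.sint (ComplexMeasure.im ν) f‖) :=
        ENNReal.ofReal_le_ofReal (norm_add_le _ _)
    _ = ENNReal.ofReal ‖CM.sint (ComplexMeasure.re ν) f‖
        + ENNReal.ofReal ‖CM.sint (ComplexMeasure.im ν) f‖ := by
        rw [norm_mul, Complex.norm_I, one_mul]
        exact ENNReal.ofReal_add (norm_nonneg _) (norm_nonneg _)
    _ ≤ _ := by
        refine add_le_add ?_ ?_ <;>
        · rw [ofReal_norm, enorm_eq_nnnorm]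
          exact hs _

end PMG
namespace PMG
open MeasureTheory Metric Set
open scoped ENNReal NNReal
variable {n : ℕ}

lemma var_finite (ν : ComplexMeasure (Rn n)) : IsFiniteMeasure (CM.var ν) := by
  refine ⟨?_⟩
  have h : CM.var ν univ
      = (ComplexMeasure.re ν).toJordanDecomposition.posPart univ
        + (ComplexMeasure.re ν).toJordanDecomposition.negPart univ
        + ((ComplexMeasure.im ν).toJordanDecomposition.posPart univ
        + (ComplexMeasure.im ν).toJordanDecomposition.negPart univ) := by
    simp [CM.var, SignedMeasure.totalVariation]
  rw [h]
  have h1 := (ComplexMeasure.re ν).toJordanDecomposition.posPart_finite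
  have h2 := (ComplexMeasure.re ν).toJordanDecomposition.negPart_finite
  have h3 := (ComplexMeasure.im ν).toJordanDecomposition.posPart_finite
  have h4 := (ComplexMeasure.im ν).toJordanDecomposition.negPart_finite
  exact ENNReal.add_lt_top.mpr ⟨ENNReal.add_lt_top.mpr ⟨measure_lt_top _ _, measure_lt_top _ _⟩,
    ENNReal.add_lt_top.mpr ⟨measure_lt_top _ _, measure_lt_top _ _⟩⟩

example (Q : Cube n) : MeasurableSet Q.carrier := by
  have : Q.carrier = ⋂ i, {x : Rn n | |x i - Q.center i| ≤ 1 * Q.side / 2} := by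
    ext x; simp [Cube.carrier, Cube.dilate, Set.mem_iInter]
  rw [this]
  refine MeasurableSet.iInter fun i => ?_
  have hc : Continuous fun x : Rn n => |x i - Q.center i| :=
    (((EuclideanSpace.proj i : EuclideanSpace ℝ (Fin n) →L[ℝ] ℝ).continuous).sub
      continuous_const).abs
  exact measurableSet_le hc.measurable measurable_const

example (μ : Measure (Rn n)) (s : ℝ → Rn n → Rn n → Rn n → ℂ) (ν : ComplexMeasure (Rn n))
    (g : Rn n → ℂ) (m lam : ℝ) (x : Rn n) :
    gstar2Mix μ m lam s ν g x =
      (∫⁻ t in Ioi (0:ℝ), gKer μ m lam (Theta2Mix μ s ν g) t x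
        / ENNReal.ofReal (t ^ (m + 1))) ^ ((1:ℝ)/2) := rfl

lemma cs_lemma (σ : Measure (Rn n)) (f : Rn n → ℝ≥0∞) (hf : Measurable f) :
    (∫⁻ z, f z ∂σ) ^ 2 ≤ σ univ * (∫⁻ z, (f z) ^ 2 ∂σ) * 2 := by
  calc (∫⁻ z, f z ∂σ) ^ 2 = ∫⁻ z, ∫⁻ w, f z * f w ∂σ ∂σ := by
        rw [pow_two, ← lintegral_mul_const _ hf]
        congr 1; ext z; rw [lintegral_const_mul _ hf]
    _ ≤ ∫⁻ z, ∫⁻ w, (f z)^2 + (f w)^2 ∂σ ∂σ := by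
        refine lintegral_mono fun z => lintegral_mono fun w => ?_
        rcases le_total (f z) (f w) with h | h
        · calc f z * f w ≤ f w * f w := mul_le_mul_left h _
            _ = (f w)^2 := (pow_two _).symm
            _ ≤ _ := le_add_self
        · calc f z * f w ≤ f z * f z := mul_le_mul_right h _
            _ = (f z)^2 := (pow_two _).symm
            _ ≤ _ := self_le_add_right _ _
    _ = σ univ * (∫⁻ z, (f z)^2 ∂σ) * 2 := by
        have hf2 : Measurable fun w => (f w)^2 := hf.pow_const 2
        calc ∫⁻ z, ∫⁻ w, (f z)^2 + (f w)^2 ∂σ ∂σ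
            = ∫⁻ z, ((f z)^2 * σ univ + ∫⁻ w, (f w)^2 ∂σ) ∂σ := by
              congr 1; ext z
              rw [lintegral_add_left measurable_const, lintegral_const, mul_comm]
          _ = (∫⁻ z, (f z)^2 ∂σ) * σ univ + (∫⁻ w, (f w)^2 ∂σ) * σ univ := by
              rw [lintegral_add_left (hf2.mul_const _), lintegral_mul_const _ hf2,
                lintegral_const]
          _ = σ univ * (∫⁻ z, (f z)^2 ∂σ) * 2 := by ring

end PMG
open PMG
set_option maxHeartbeats 2000000 in
/-- the estimate (4.8): for `ν` supported in a cube `Q` and `g ∈ L^∞(μ)`,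
`g_λ^*(ν, gμ)(x) ≲ ‖g‖_∞ ‖ν‖ / |x-c_Q|^m` for `x ∉ 2Q`. -/
theorem pointwise_measure_good (n : ℕ) (m lam α Cμ A : ℝ)
    (μ : Measure (Rn n)) (s : ℝ → Rn n → Rn n → Rn n → ℂ)
    (hn : 1 ≤ n) (hm : 0 < m) (hlam : 4 < lam) (hα : 0 < α) (hα' : α ≤ m * (lam - 4))
    (hμ : IsPowerBounded μ m Cμ) (hker : IsLPKernel2 m α A s) :
    ∃ C : ℝ, 0 ≤ C ∧
      ∀ (Q : Cube n) (ν : ComplexMeasure (Rn n)) (g : Rn n → ℂ),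
        CM.var ν Q.carrierᶜ = 0 → MemLp g ⊤ μ →
        ∀ x, x ∉ Q.dilate 2 →
          gstar2Mix μ m lam s ν g x
            ≤ ENNReal.ofReal C * eLpNorm g ⊤ μ *
                ENNReal.ofReal (CM.norm ν / dist x Q.center ^ m) := by
  classical
  -- normalized constants
  set A' := max A 0 with hA'def
  have hA0 : (0:ℝ) ≤ A' := le_max_right _ _
  set Cμ' := max Cμ 0 with hCdef
  have hC0 : (0:ℝ) ≤ Cμ' := le_max_right _ _
  have hμ' : IsPowerBounded μ m Cμ' := by
    intro x r hr
    refine le_trans (hμ x r hr) (ENNReal.ofReal_le_ofReal ?_)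
    exact mul_le_mul_of_nonneg_right (le_max_left _ _) (Real.rpow_nonneg hr.le m)
  have hsize' : ∀ (t : ℝ) (x y₁ y₂ : Rn n), 0 < t → ‖s t x y₁ y₂‖ ≤
      A' * t ^ (2*α) * (t + dist x y₁) ^ (-(m+α)) * (t + dist x y₂) ^ (-(m+α)) := by
    intro t x y₁ y₂ ht
    refine le_trans (hker.size t x y₁ y₂ ht) ?_
    have h1 : (0:ℝ) ≤ (t + dist x y₂) ^ (-(m+α)) :=
      Real.rpow_nonneg (by positivity) _
    have h2 : (0:ℝ) ≤ (t + dist x y₁) ^ (-(m+α)) :=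
      Real.rpow_nonneg (by positivity) _
    have h3 : (0:ℝ) ≤ t ^ (2*α) := Real.rpow_nonneg ht.le _
    exact mul_le_mul_of_nonneg_right (mul_le_mul_of_nonneg_right
      (mul_le_mul_of_nonneg_right (le_max_left A 0) h3) h2) h1
  haveI hSF : SigmaFinite μ := sigmaFinite_of_powerBounded μ m Cμ' hμ'
  obtain ⟨c1, hc1t, hc1⟩ := tail_bound μ hμ' hm hC0 (b := m + α) (by linarith)
  obtain ⟨c2, hc2t, hc2⟩ := tail_bound μ hμ' hm hC0 (b := 2*(m+α)) (by linarith)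
  obtain ⟨c3, hc3t, hc3⟩ := tail_bound μ hμ' hm hC0 (b := 4*m+α) (by linarith)
  obtain ⟨cB1, hcB1t, hcB1⟩ :=
    t_integral_bound (p := 2*m+α) (q := 4*m+α) (by linarith) (by linarith)
  obtain ⟨cB2, hcB2t, hcB2⟩ :=
    t_integral_bound (p := 2*α) (q := 2*(m+α)) (by linarith) (by linarith)
  have hsqn : (0:ℝ) < Real.sqrt n :=
    Real.sqrt_pos.mpr (by exact_mod_cast Nat.pos_of_ne_zero (by omega))
  set Cbase : ℝ≥0∞ := (ENNReal.ofReal A' * c1)^2 * 2 * (c2 * cB1 + c3 * cB2)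
      * ENNReal.ofReal ((4*Real.sqrt n)^(2*m)) with hCbase
  have hCbase_ne : Cbase ≠ ∞ := by
    rw [hCbase]
    refine ENNReal.mul_ne_top (ENNReal.mul_ne_top (ENNReal.mul_ne_top ?_ (by norm_num)) ?_)
      ENNReal.ofReal_ne_top
    · exact ENNReal.pow_ne_top (ENNReal.mul_ne_top ENNReal.ofReal_ne_top hc1t)
    · exact ENNReal.add_ne_top.mpr ⟨ENNReal.mul_ne_top hc2t hcB1t, ENNReal.mul_ne_top hc3t hcB2t⟩
  refine ⟨(Cbase ^ ((1:ℝ)/2)).toReal, ENNReal.toReal_nonneg, ?_⟩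
  intro Q ν g hν hg x hx
  haveI := var_finite ν
  set σ := CM.var ν with hσdef
  set G := eLpNorm g ⊤ μ with hGdef
  have hGne : G ≠ ∞ := hg.2.ne
  have hσu : σ univ ≠ ∞ := measure_ne_top _ _
  set D := dist x Q.center with hDdef
  have hD : 0 < D := by
    rw [hDdef, dist_pos]
    intro hxy
    apply hx
    rw [hxy]
    intro i
    simp only [sub_self, abs_zero]
    have := Q.side_pos
    linarith
  set Dm : ℝ := D / (4 * Real.sqrt n) with hDmdef
  have hDm0 : 0 < Dm := by rw [hDmdef]; positivity
  have hQae : ∀ᵐ z ∂σ, z ∈ Q.carrier := by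
    rw [ae_iff]
    exact hν
  -- distance comparison for z ∈ Q
  have hzQ : ∀ z ∈ Q.carrier, Dm ≤ dist x z / 2 := by
    intro z hz
    have h := dist_lower hn Q hx hz
    rw [hDmdef]
    rw [div_le_div_iff₀ (by positivity) (by norm_num)]
    calc D * 2 ≤ (2 * Real.sqrt n) * dist x z * 2 := by linarith
      _ = dist x z * (4 * Real.sqrt n) := by ring
  have hzpos : ∀ z ∈ Q.carrier, 0 < dist x z / 2 := fun z hz => lt_of_lt_of_le hDm0 (hzQ z hz)
  -- measurability facts
  have hdyz : ∀ y : Rn n, Measurable fun z : Rn n => dist y z :=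
    fun y => (continuous_const.dist continuous_id).measurable
  have hdxy : Measurable fun y : Rn n => dist x y := hdyz x
  have hF1m : ∀ t (y : Rn n), Measurable fun z : Rn n =>
      ENNReal.ofReal ((t + dist y z) ^ (-(m+α))) := fun t y =>
    ENNReal.measurable_ofReal.comp ((measurable_const.add (hdyz y)).rpow_const' _)
  have hF2m : ∀ t (y : Rn n), Measurable fun z : Rn n =>
      ENNReal.ofReal ((t + dist y z) ^ (-(2*(m+α)))) := fun t y =>
    ENNReal.measurable_ofReal.comp ((measurable_const.add (hdyz y)).rpow_const' _)
  set KA : ℝ≥0∞ := ENNReal.ofReal A' * G * c1 with hKAdef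
  have hKAne : KA ≠ ∞ := by
    rw [hKAdef]
    exact ENNReal.mul_ne_top (ENNReal.mul_ne_top ENNReal.ofReal_ne_top hGne) hc1t
  -- Step 1 : pointwise bound on Θ
  have hΘb : ∀ {t : ℝ}, 0 < t → ∀ y, (‖Theta2Mix μ s ν g t y‖₊ : ℝ≥0∞)
      ≤ KA * (ENNReal.ofReal (t ^ α)
        * ∫⁻ z, ENNReal.ofReal ((t + dist y z) ^ (-(m+α))) ∂σ) := by
    intro t ht y
    have hinner : ∀ z₁ : Rn n, ENNReal.ofReal ‖∫ z₂, s t y z₁ z₂ * g z₂ ∂μ‖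
        ≤ (KA * ENNReal.ofReal (t ^ α)) * ENNReal.ofReal ((t + dist y z₁) ^ (-(m+α))) := by
      intro z₁
      have hw1 : (0:ℝ) ≤ (t + dist y z₁) ^ (-(m+α)) := Real.rpow_nonneg (by positivity) _
      calc ENNReal.ofReal ‖∫ z₂, s t y z₁ z₂ * g z₂ ∂μ‖
          ≤ ∫⁻ z₂, ENNReal.ofReal ‖s t y z₁ z₂ * g z₂‖ ∂μ :=
            le_trans (ENNReal.ofReal_le_ofReal (norm_integral_le_lintegral_norm _))
              ENNReal.ofReal_toReal_le
        _ ≤ ∫⁻ z₂, ENNReal.ofReal (A' * t^(2*α) * (t + dist y z₁)^(-(m+α))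
              * ((t + dist y z₂)^(-(m+α)) * ‖g z₂‖)) ∂μ := by
            refine lintegral_mono fun z₂ => ENNReal.ofReal_le_ofReal ?_
            rw [norm_mul]
            calc ‖s t y z₁ z₂‖ * ‖g z₂‖
                ≤ (A' * t^(2*α) * (t + dist y z₁)^(-(m+α)) * (t + dist y z₂)^(-(m+α)))
                    * ‖g z₂‖ :=
                  mul_le_mul_of_nonneg_right (hsize' t y z₁ z₂ ht) (norm_nonneg _)
              _ = A' * t^(2*α) * (t + dist y z₁)^(-(m+α))
                    * ((t + dist y z₂)^(-(m+α)) * ‖g z₂‖) := by ring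
        _ = ENNReal.ofReal (A' * t^(2*α) * (t + dist y z₁)^(-(m+α)))
              * ∫⁻ z₂, ENNReal.ofReal ((t + dist y z₂)^(-(m+α))) * (‖g z₂‖₊ : ℝ≥0∞) ∂μ := by
            rw [← lintegral_const_mul' _ _ ENNReal.ofReal_ne_top]
            refine lintegral_congr fun z₂ => ?_
            rw [← enorm_eq_nnnorm, ← ofReal_norm,
              ← ENNReal.ofReal_mul (Real.rpow_nonneg (by positivity) _),
              ← ENNReal.ofReal_mul (by positivity)]
        _ ≤ ENNReal.ofReal (A' * t^(2*α) * (t + dist y z₁)^(-(m+α)))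
              * (G * (c1 * ENNReal.ofReal (t ^ (m - (m+α))))) := by
            refine mul_le_mul_right ?_ _
            have hGess : ∀ᵐ z₂ ∂μ, (‖g z₂‖₊ : ℝ≥0∞) ≤ G := by
              rw [hGdef, eLpNorm_exponent_top]
              exact ae_le_eLpNormEssSup
            calc ∫⁻ z₂, ENNReal.ofReal ((t + dist y z₂)^(-(m+α))) * (‖g z₂‖₊ : ℝ≥0∞) ∂μ
                ≤ ∫⁻ z₂, ENNReal.ofReal ((t + dist y z₂)^(-(m+α))) * G ∂μ := by
                  refine lintegral_mono_ae ?_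
                  filter_upwards [hGess] with z₂ hz₂
                  exact mul_le_mul_right hz₂ _
              _ = (∫⁻ z₂, ENNReal.ofReal ((t + dist y z₂)^(-(m+α))) ∂μ) * G :=
                  lintegral_mul_const' _ _ hGne
              _ ≤ (c1 * ENNReal.ofReal (t ^ (m - (m+α)))) * G := by
                  refine mul_le_mul_left ?_ _
                  have := hc1 y ht
                  simpa [dist_comm] using this
              _ = G * (c1 * ENNReal.ofReal (t ^ (m - (m+α)))) := mul_comm _ _
        _ = (KA * ENNReal.ofReal (t ^ α)) * ENNReal.ofReal ((t + dist y z₁) ^ (-(m+α))) := by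
            rw [ENNReal.ofReal_mul (by positivity), ENNReal.ofReal_mul hA0]
            have e1 : ENNReal.ofReal (t^(2*α)) * ENNReal.ofReal (t^(m-(m+α)))
                = ENNReal.ofReal (t ^ α) := by
              rw [orp ht]; congr 1; ring_nf
            rw [hKAdef, ← e1]
            ring
    calc (‖Theta2Mix μ s ν g t y‖₊ : ℝ≥0∞)
        ≤ ∫⁻ z₁, ENNReal.ofReal ‖∫ z₂, s t y z₁ z₂ * g z₂ ∂μ‖ ∂σ := norm_cint_le ν _
      _ ≤ ∫⁻ z₁, (KA * ENNReal.ofReal (t ^ α))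
            * ENNReal.ofReal ((t + dist y z₁) ^ (-(m+α))) ∂σ := lintegral_mono hinner
      _ = (KA * ENNReal.ofReal (t ^ α))
            * ∫⁻ z₁, ENNReal.ofReal ((t + dist y z₁) ^ (-(m+α))) ∂σ :=
          lintegral_const_mul' _ _ (ENNReal.mul_ne_top hKAne ENNReal.ofReal_ne_top)
      _ = _ := by ring
  -- Step 2 : kernel bound
  have hKer : ∀ {t : ℝ}, 0 < t →
      gKer μ m lam (Theta2Mix μ s ν g) t x / ENNReal.ofReal (t ^ (m+1))
        ≤ (KA^2 * 2 * σ univ) * ∫⁻ z,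
            (c2 * ENNReal.ofReal (t^(2*m+α-1) * (t + dist x z/2)^(-(4*m+α)))
            + c3 * ENNReal.ofReal (t^(2*α-1) * (t + dist x z/2)^(-(2*(m+α))))) ∂σ := by
    intro t ht
    have hsq : ∀ y, ((‖Theta2Mix μ s ν g t y‖₊ : ℝ≥0∞))^2
        ≤ (KA^2 * 2 * ENNReal.ofReal (t^(2*α)) * σ univ)
          * ∫⁻ z, ENNReal.ofReal ((t + dist y z)^(-(2*(m+α)))) ∂σ := by
      intro y
      refine le_trans (pow_le_pow_left' (hΘb ht y) 2) ?_
      have hsq2 : (∫⁻ z, ENNReal.ofReal ((t + dist y z)^(-(m+α))) ∂σ)^2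
          ≤ σ univ * (∫⁻ z, ENNReal.ofReal ((t + dist y z)^(-(2*(m+α)))) ∂σ) * 2 := by
        refine le_trans (cs_lemma σ _ (hF1m t y)) (le_of_eq ?_)
        congr 2
        refine lintegral_congr fun z => ?_
        rw [pow_two, ← ENNReal.ofReal_mul (Real.rpow_nonneg (by positivity) _),
          ← Real.rpow_add (by positivity)]
        congr 1
        ring_nf
      have e2 : ENNReal.ofReal (t^α) * ENNReal.ofReal (t^α) = ENNReal.ofReal (t^(2*α)) := by
        rw [orp ht]; congr 1; ring_nf
      calc (KA * (ENNReal.ofReal (t^α)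
            * ∫⁻ z, ENNReal.ofReal ((t + dist y z)^(-(m+α))) ∂σ))^2
          = KA^2 * (ENNReal.ofReal (t^α) * ENNReal.ofReal (t^α))
            * (∫⁻ z, ENNReal.ofReal ((t + dist y z)^(-(m+α))) ∂σ)^2 := by ring
        _ = KA^2 * ENNReal.ofReal (t^(2*α))
            * (∫⁻ z, ENNReal.ofReal ((t + dist y z)^(-(m+α))) ∂σ)^2 := by rw [e2]
        _ ≤ KA^2 * ENNReal.ofReal (t^(2*α)) * (σ univ
            * (∫⁻ z, ENNReal.ofReal ((t + dist y z)^(-(2*(m+α)))) ∂σ) * 2) :=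
            mul_le_mul_right hsq2 _
        _ = _ := by ring
    have hswap : ∫⁻ y, (ENNReal.ofReal ((t/(t+dist x y))^(m*lam))
          * ∫⁻ z, ENNReal.ofReal ((t + dist y z)^(-(2*(m+α)))) ∂σ) ∂μ
        = ∫⁻ z, (∫⁻ y, ENNReal.ofReal ((t/(t+dist x y))^(m*lam))
          * ENNReal.ofReal ((t + dist y z)^(-(2*(m+α)))) ∂μ) ∂σ := by
      have hpair : Measurable (fun p : Rn n × Rn n =>
          ENNReal.ofReal ((t/(t+dist x p.1))^(m*lam))
          * ENNReal.ofReal ((t + dist p.1 p.2)^(-(2*(m+α))))) := by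
        refine Measurable.fun_mul ?_ ?_
        · exact ENNReal.measurable_ofReal.comp
            ((measurable_const.div (measurable_const.add
              ((continuous_const.dist continuous_fst).measurable))).rpow_const' _)
        · exact ENNReal.measurable_ofReal.comp
            ((measurable_const.add measurable_dist).rpow_const' _)
      calc ∫⁻ y, (ENNReal.ofReal ((t/(t+dist x y))^(m*lam))
            * ∫⁻ z, ENNReal.ofReal ((t + dist y z)^(-(2*(m+α)))) ∂σ) ∂μ
          = ∫⁻ y, ∫⁻ z, ENNReal.ofReal ((t/(t+dist x y))^(m*lam))
            * ENNReal.ofReal ((t + dist y z)^(-(2*(m+α)))) ∂σ ∂μ :=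
            lintegral_congr fun y => (lintegral_const_mul' _ _ ENNReal.ofReal_ne_top).symm
        _ = _ := lintegral_lintegral_swap hpair.aemeasurable
    have hinner2 : ∀ z : Rn n, (∫⁻ y, ENNReal.ofReal ((t/(t+dist x y))^(m*lam))
          * ENNReal.ofReal ((t + dist y z)^(-(2*(m+α)))) ∂μ)
        ≤ ENNReal.ofReal (t^(4*m+α)) *
            (ENNReal.ofReal ((t + dist x z/2)^(-(4*m+α)))
              * (c2 * ENNReal.ofReal (t^(m-2*(m+α))))
            + (c3 * ENNReal.ofReal (t^(m-(4*m+α))))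
              * ENNReal.ofReal ((t + dist x z/2)^(-(2*(m+α))))) := by
      intro z
      have hpoint : ∀ y, ENNReal.ofReal ((t/(t+dist x y))^(m*lam))
            * ENNReal.ofReal ((t + dist y z)^(-(2*(m+α))))
          ≤ ENNReal.ofReal (t^(4*m+α)) *
              (ENNReal.ofReal ((t + dist x z/2)^(-(4*m+α)))
                * ENNReal.ofReal ((t + dist y z)^(-(2*(m+α))))
              + ENNReal.ofReal ((t + dist x y)^(-(4*m+α)))
                * ENNReal.ofReal ((t + dist x z/2)^(-(2*(m+α))))) := by
        intro y
        have hu : (0:ℝ) ≤ dist x y := dist_nonneg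
        have hv : (0:ℝ) ≤ dist y z := dist_nonneg
        have hxz : (0:ℝ) ≤ dist x z := dist_nonneg
        have hW : ((t/(t+dist x y))^(m*lam))
            ≤ t^(4*m+α) * (t+dist x y)^(-(4*m+α)) := by
          have hr0 : 0 < t/(t+dist x y) := by positivity
          have hr1 : t/(t+dist x y) ≤ 1 := by
            rw [div_le_one (by positivity)]; linarith
          have haa : (4*m+α) ≤ m*lam := by nlinarith
          calc (t/(t+dist x y))^(m*lam) ≤ (t/(t+dist x y))^(4*m+α) :=
                Real.rpow_le_rpow_of_exponent_ge hr0 hr1 haa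
            _ = t^(4*m+α) * (t+dist x y)^(-(4*m+α)) := by
                rw [Real.div_rpow ht.le (by positivity),
                  Real.rpow_neg (by positivity), div_eq_mul_inv]
        have hsplit : (t+dist x y)^(-(4*m+α)) * (t+dist y z)^(-(2*(m+α)))
            ≤ (t + dist x z/2)^(-(4*m+α)) * (t+dist y z)^(-(2*(m+α)))
              + (t+dist x y)^(-(4*m+α)) * (t + dist x z/2)^(-(2*(m+α))) := by
          have htri : dist x z ≤ dist x y + dist y z := dist_triangle x y z
          rcases le_or_gt (dist x z / 2) (dist x y) with hcase | hcase
          · have h1 : (t+dist x y)^(-(4*m+α)) ≤ (t + dist x z/2)^(-(4*m+α)) :=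
              Real.rpow_le_rpow_of_nonpos (by positivity) (by linarith) (by linarith)
            have hc := Real.rpow_nonneg (show (0:ℝ) ≤ t+dist y z by positivity) (-(2*(m+α)))
            have hd : (0:ℝ) ≤ (t+dist x y)^(-(4*m+α)) * (t + dist x z/2)^(-(2*(m+α))) :=
              mul_nonneg (Real.rpow_nonneg (by positivity) _)
                (Real.rpow_nonneg (by positivity) _)
            nlinarith
          · have hv2 : dist x z / 2 ≤ dist y z := by linarith
            have h1 : (t+dist y z)^(-(2*(m+α))) ≤ (t + dist x z/2)^(-(2*(m+α))) :=
              Real.rpow_le_rpow_of_nonpos (by positivity) (by linarith) (by linarith)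
            have hc := Real.rpow_nonneg (show (0:ℝ) ≤ t+dist x y by positivity) (-(4*m+α))
            have hd : (0:ℝ) ≤ (t + dist x z/2)^(-(4*m+α)) * (t+dist y z)^(-(2*(m+α))) :=
              mul_nonneg (Real.rpow_nonneg (by positivity) _)
                (Real.rpow_nonneg (by positivity) _)
            nlinarith
        calc ENNReal.ofReal ((t/(t+dist x y))^(m*lam))
              * ENNReal.ofReal ((t + dist y z)^(-(2*(m+α))))
            = ENNReal.ofReal ((t/(t+dist x y))^(m*lam) * (t + dist y z)^(-(2*(m+α)))) :=
              (ENNReal.ofReal_mul (Real.rpow_nonneg (by positivity) _)).symm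
          _ ≤ ENNReal.ofReal (t^(4*m+α) *
                ((t + dist x z/2)^(-(4*m+α)) * (t+dist y z)^(-(2*(m+α)))
                + (t+dist x y)^(-(4*m+α)) * (t + dist x z/2)^(-(2*(m+α))))) := by
              refine ENNReal.ofReal_le_ofReal ?_
              calc (t/(t+dist x y))^(m*lam) * (t + dist y z)^(-(2*(m+α)))
                  ≤ (t^(4*m+α) * (t+dist x y)^(-(4*m+α))) * (t + dist y z)^(-(2*(m+α))) :=
                    mul_le_mul_of_nonneg_right hW (Real.rpow_nonneg (by positivity) _)
                _ = t^(4*m+α) * ((t+dist x y)^(-(4*m+α)) * (t + dist y z)^(-(2*(m+α)))) := by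
                    ring
                _ ≤ _ := mul_le_mul_of_nonneg_left hsplit (Real.rpow_nonneg ht.le _)
          _ = _ := by
              rw [ENNReal.ofReal_mul (Real.rpow_nonneg ht.le _),
                ENNReal.ofReal_add (by positivity) (by positivity),
                ENNReal.ofReal_mul (Real.rpow_nonneg (by positivity) _),
                ENNReal.ofReal_mul (Real.rpow_nonneg (by positivity) _)]
      calc (∫⁻ y, ENNReal.ofReal ((t/(t+dist x y))^(m*lam))
            * ENNReal.ofReal ((t + dist y z)^(-(2*(m+α)))) ∂μ)
          ≤ ∫⁻ y, ENNReal.ofReal (t^(4*m+α)) *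
              (ENNReal.ofReal ((t + dist x z/2)^(-(4*m+α)))
                * ENNReal.ofReal ((t + dist y z)^(-(2*(m+α))))
              + ENNReal.ofReal ((t + dist x y)^(-(4*m+α)))
                * ENNReal.ofReal ((t + dist x z/2)^(-(2*(m+α))))) ∂μ :=
            lintegral_mono hpoint
        _ = ENNReal.ofReal (t^(4*m+α)) *
              (ENNReal.ofReal ((t + dist x z/2)^(-(4*m+α)))
                * ∫⁻ y, ENNReal.ofReal ((t + dist y z)^(-(2*(m+α)))) ∂μ
              + (∫⁻ y, ENNReal.ofReal ((t + dist x y)^(-(4*m+α))) ∂μ)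
                * ENNReal.ofReal ((t + dist x z/2)^(-(2*(m+α))))) := by
            rw [lintegral_const_mul' _ _ ENNReal.ofReal_ne_top]
            congr 1
            have hm1 : Measurable fun a : Rn n =>
                ENNReal.ofReal ((t + dist a z)^(-(2*(m+α)))) :=
              ENNReal.measurable_ofReal.comp ((measurable_const.add
                ((continuous_id.dist continuous_const).measurable)).rpow_const' _)
            rw [lintegral_add_left (hm1.const_mul _),
              lintegral_const_mul' _ _ ENNReal.ofReal_ne_top,
              lintegral_mul_const' _ _ ENNReal.ofReal_ne_top]
        _ ≤ _ := by
            refine mul_le_mul_right (add_le_add ?_ ?_) _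
            · exact mul_le_mul_right (hc2 z ht) _
            · refine mul_le_mul_left ?_ _
              have := hc3 x ht
              simpa [dist_comm] using this
    have hKcne' : KA^2 * 2 * ENNReal.ofReal (t^(2*α)) * σ univ ≠ ⊤ :=
      ENNReal.mul_ne_top (ENNReal.mul_ne_top (ENNReal.mul_ne_top
        (ENNReal.pow_ne_top hKAne) ENNReal.ofNat_ne_top) ENNReal.ofReal_ne_top) hσu
    have hgker : gKer μ m lam (Theta2Mix μ s ν g) t x
        ≤ (KA^2 * 2 * ENNReal.ofReal (t^(2*α)) * σ univ)
          * ∫⁻ z, (∫⁻ y, ENNReal.ofReal ((t/(t+dist x y))^(m*lam))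
            * ENNReal.ofReal ((t + dist y z)^(-(2*(m+α)))) ∂μ) ∂σ := by
      calc gKer μ m lam (Theta2Mix μ s ν g) t x
          = ∫⁻ y, ENNReal.ofReal ((t/(t+dist x y))^(m*lam))
            * (‖Theta2Mix μ s ν g t y‖₊ : ℝ≥0∞)^2 ∂μ := rfl
        _ ≤ ∫⁻ y, ENNReal.ofReal ((t/(t+dist x y))^(m*lam))
            * ((KA^2 * 2 * ENNReal.ofReal (t^(2*α)) * σ univ)
              * ∫⁻ z, ENNReal.ofReal ((t + dist y z)^(-(2*(m+α)))) ∂σ) ∂μ :=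
            lintegral_mono fun y => mul_le_mul_right (hsq y) _
        _ = (KA^2 * 2 * ENNReal.ofReal (t^(2*α)) * σ univ)
            * ∫⁻ y, ENNReal.ofReal ((t/(t+dist x y))^(m*lam))
              * ∫⁻ z, ENNReal.ofReal ((t + dist y z)^(-(2*(m+α)))) ∂σ ∂μ := by
            rw [← lintegral_const_mul' _ _ hKcne']
            exact lintegral_congr fun y => by ring
        _ = _ := by rw [hswap]
    have e1 : ENNReal.ofReal (t^(2*α)) * ENNReal.ofReal (t^(-(m+1)))
        * (ENNReal.ofReal (t^(4*m+α)) * ENNReal.ofReal (t^(m-2*(m+α))))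
        = ENNReal.ofReal (t^(2*m+α-1)) := by
      rw [orp ht, orp ht, orp ht]; congr 1; ring_nf
    have e2 : ENNReal.ofReal (t^(2*α)) * ENNReal.ofReal (t^(-(m+1)))
        * (ENNReal.ofReal (t^(4*m+α)) * ENNReal.ofReal (t^(m-(4*m+α))))
        = ENNReal.ofReal (t^(2*α-1)) := by
      rw [orp ht, orp ht, orp ht]; congr 1; ring_nf
    have hAlg : ∀ z : Rn n, ENNReal.ofReal (t^(2*α)) * ENNReal.ofReal (t^(-(m+1)))
          * (ENNReal.ofReal (t^(4*m+α)) *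
            (ENNReal.ofReal ((t + dist x z/2)^(-(4*m+α)))
              * (c2 * ENNReal.ofReal (t^(m-2*(m+α))))
            + (c3 * ENNReal.ofReal (t^(m-(4*m+α))))
              * ENNReal.ofReal ((t + dist x z/2)^(-(2*(m+α))))))
        = c2 * ENNReal.ofReal (t^(2*m+α-1) * (t + dist x z/2)^(-(4*m+α)))
          + c3 * ENNReal.ofReal (t^(2*α-1) * (t + dist x z/2)^(-(2*(m+α)))) := by
      intro z
      rw [ENNReal.ofReal_mul (Real.rpow_nonneg ht.le _),
        ENNReal.ofReal_mul (Real.rpow_nonneg ht.le _), ← e1, ← e2]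
      ring
    calc gKer μ m lam (Theta2Mix μ s ν g) t x / ENNReal.ofReal (t ^ (m+1))
        ≤ ((KA^2 * 2 * ENNReal.ofReal (t^(2*α)) * σ univ)
            * ∫⁻ z, (∫⁻ y, ENNReal.ofReal ((t/(t+dist x y))^(m*lam))
              * ENNReal.ofReal ((t + dist y z)^(-(2*(m+α)))) ∂μ) ∂σ)
            * (ENNReal.ofReal (t^(m+1)))⁻¹ := by
          rw [div_eq_mul_inv]; exact mul_le_mul_left hgker _
      _ = (KA^2 * 2 * σ univ) * ∫⁻ z,
            (ENNReal.ofReal (t^(2*α)) * ENNReal.ofReal (t^(-(m+1))))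
            * (∫⁻ y, ENNReal.ofReal ((t/(t+dist x y))^(m*lam))
              * ENNReal.ofReal ((t + dist y z)^(-(2*(m+α)))) ∂μ) ∂σ := by
          rw [inv_ofReal_rpow ht (m+1), lintegral_const_mul'
            (ENNReal.ofReal (t^(2*α)) * ENNReal.ofReal (t^(-(m+1)))) _
            (ENNReal.mul_ne_top ENNReal.ofReal_ne_top ENNReal.ofReal_ne_top)]
          ring
      _ ≤ _ := by
          refine mul_le_mul_right (lintegral_mono fun z => ?_) _
          exact le_trans (mul_le_mul_right (hinner2 z) _) (le_of_eq (hAlg z))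
  -- final assembly
  set Kc : ℝ≥0∞ := KA^2 * 2 * σ univ with hKcdef
  have hKcne : Kc ≠ ⊤ := ENNReal.mul_ne_top (ENNReal.mul_ne_top
    (ENNReal.pow_ne_top hKAne) ENNReal.ofNat_ne_top) hσu
  have hHz : ∀ z ∈ Q.carrier, (∫⁻ t in Ioi (0:ℝ),
        (c2 * ENNReal.ofReal (t^(2*m+α-1) * (t + dist x z/2)^(-(4*m+α)))
        + c3 * ENNReal.ofReal (t^(2*α-1) * (t + dist x z/2)^(-(2*(m+α))))))
      ≤ (c2 * cB1 + c3 * cB2) * ENNReal.ofReal (Dm ^ (-(2*m))) := by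
    intro z hz
    have hdz : 0 < dist x z / 2 := hzpos z hz
    have hmeas1 : Measurable fun t : ℝ =>
        ENNReal.ofReal (t^(2*m+α-1) * (t + dist x z/2)^(-(4*m+α))) :=
      ENNReal.measurable_ofReal.comp ((measurable_id.rpow_const' _).mul
        ((measurable_id.add_const _).rpow_const' _))
    have hmeas2 : Measurable fun t : ℝ =>
        ENNReal.ofReal (t^(2*α-1) * (t + dist x z/2)^(-(2*(m+α)))) :=
      ENNReal.measurable_ofReal.comp ((measurable_id.rpow_const' _).mul
        ((measurable_id.add_const _).rpow_const' _))
    have hmono' : ENNReal.ofReal ((dist x z/2) ^ (-(2*m)))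
        ≤ ENNReal.ofReal (Dm ^ (-(2*m))) :=
      ENNReal.ofReal_le_ofReal (Real.rpow_le_rpow_of_nonpos hDm0 (hzQ z hz) (by linarith))
    rw [lintegral_add_left (hmeas1.const_mul _), lintegral_const_mul' c2 _ hc2t,
      lintegral_const_mul' c3 _ hc3t]
    have h1 := hcB1 hdz
    have h2 := hcB2 hdz
    rw [show (2*m+α-(4*m+α)) = -(2*m) by ring] at h1
    rw [show (2*α-2*(m+α)) = -(2*m) by ring] at h2
    calc c2 * (∫⁻ t in Ioi (0:ℝ),
          ENNReal.ofReal (t^(2*m+α-1) * (t + dist x z/2)^(-(4*m+α))))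
        + c3 * (∫⁻ t in Ioi (0:ℝ),
          ENNReal.ofReal (t^(2*α-1) * (t + dist x z/2)^(-(2*(m+α)))))
        ≤ c2 * (cB1 * ENNReal.ofReal ((dist x z/2) ^ (-(2*m))))
          + c3 * (cB2 * ENNReal.ofReal ((dist x z/2) ^ (-(2*m)))) :=
          add_le_add (mul_le_mul_right h1 _) (mul_le_mul_right h2 _)
      _ ≤ c2 * (cB1 * ENNReal.ofReal (Dm ^ (-(2*m))))
          + c3 * (cB2 * ENNReal.ofReal (Dm ^ (-(2*m)))) :=
          add_le_add (mul_le_mul_right (mul_le_mul_right hmono' _) _)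
            (mul_le_mul_right (mul_le_mul_right hmono' _) _)
      _ = _ := by ring
  have hswap2 : (∫⁻ t in Ioi (0:ℝ), (∫⁻ z,
        (c2 * ENNReal.ofReal (t^(2*m+α-1) * (t + dist x z/2)^(-(4*m+α)))
        + c3 * ENNReal.ofReal (t^(2*α-1) * (t + dist x z/2)^(-(2*(m+α))))) ∂σ))
      = ∫⁻ z, (∫⁻ t in Ioi (0:ℝ),
        (c2 * ENNReal.ofReal (t^(2*m+α-1) * (t + dist x z/2)^(-(4*m+α)))
        + c3 * ENNReal.ofReal (t^(2*α-1) * (t + dist x z/2)^(-(2*(m+α)))))) ∂σ := by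
    have hb : Measurable fun p : ℝ × Rn n => p.1 + dist x p.2 / 2 :=
      measurable_fst.add (((continuous_const.dist continuous_snd).measurable).div_const 2)
    have hpairH : Measurable (fun p : ℝ × Rn n =>
        c2 * ENNReal.ofReal (p.1^(2*m+α-1) * (p.1 + dist x p.2/2)^(-(4*m+α)))
        + c3 * ENNReal.ofReal (p.1^(2*α-1) * (p.1 + dist x p.2/2)^(-(2*(m+α))))) := by
      refine Measurable.add ?_ ?_ <;>
      · refine Measurable.const_mul (ENNReal.measurable_ofReal.comp ?_) _
        exact ((measurable_fst.rpow_const' _).mul (hb.rpow_const' _))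
    exact lintegral_lintegral_swap hpairH.aemeasurable
  have hL : (∫⁻ t in Ioi (0:ℝ),
        gKer μ m lam (Theta2Mix μ s ν g) t x / ENNReal.ofReal (t^(m+1)))
      ≤ Kc * ((c2*cB1 + c3*cB2) * ENNReal.ofReal (Dm ^ (-(2*m))) * σ univ) := by
    calc (∫⁻ t in Ioi (0:ℝ),
          gKer μ m lam (Theta2Mix μ s ν g) t x / ENNReal.ofReal (t^(m+1)))
        ≤ ∫⁻ t in Ioi (0:ℝ), Kc * (∫⁻ z,
            (c2 * ENNReal.ofReal (t^(2*m+α-1) * (t + dist x z/2)^(-(4*m+α)))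
            + c3 * ENNReal.ofReal (t^(2*α-1) * (t + dist x z/2)^(-(2*(m+α))))) ∂σ) :=
          lintegral_mono_ae ((ae_restrict_iff' measurableSet_Ioi).mpr
            (ae_of_all _ fun t ht => hKer ht))
      _ = Kc * ∫⁻ t in Ioi (0:ℝ), (∫⁻ z,
            (c2 * ENNReal.ofReal (t^(2*m+α-1) * (t + dist x z/2)^(-(4*m+α)))
            + c3 * ENNReal.ofReal (t^(2*α-1) * (t + dist x z/2)^(-(2*(m+α))))) ∂σ) :=
          lintegral_const_mul' _ _ hKcne
      _ = Kc * ∫⁻ z, (∫⁻ t in Ioi (0:ℝ),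
            (c2 * ENNReal.ofReal (t^(2*m+α-1) * (t + dist x z/2)^(-(4*m+α)))
            + c3 * ENNReal.ofReal (t^(2*α-1) * (t + dist x z/2)^(-(2*(m+α)))))) ∂σ := by
          rw [hswap2]
      _ ≤ Kc * ∫⁻ _z, ((c2*cB1 + c3*cB2) * ENNReal.ofReal (Dm ^ (-(2*m)))) ∂σ := by
          refine mul_le_mul_right (lintegral_mono_ae ?_) _
          filter_upwards [hQae] with z hz
          exact hHz z hz
      _ = Kc * ((c2*cB1 + c3*cB2) * ENNReal.ofReal (Dm ^ (-(2*m))) * σ univ) := by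
          rw [lintegral_const]
  have hDmrw : ENNReal.ofReal (Dm ^ (-(2*m)))
      = ENNReal.ofReal ((4*Real.sqrt n)^(2*m))
        * (ENNReal.ofReal (D^(-m)) * ENNReal.ofReal (D^(-m))) := by
    rw [← ENNReal.ofReal_mul (Real.rpow_nonneg hD.le _),
      ← ENNReal.ofReal_mul (Real.rpow_nonneg (by positivity) _)]
    congr 1
    have hdd : D^(-m) * D^(-m) = D^(-(2*m)) := by
      rw [← Real.rpow_add hD]; congr 1; ring
    rw [hdd, hDmdef, Real.div_rpow hD.le (by positivity),
      Real.rpow_neg (by positivity : (0:ℝ) ≤ 4*Real.sqrt n) (2*m), div_eq_mul_inv, inv_inv]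
    ring
  have hfin : (∫⁻ t in Ioi (0:ℝ),
        gKer μ m lam (Theta2Mix μ s ν g) t x / ENNReal.ofReal (t^(m+1)))
      ≤ Cbase * (G * (σ univ * ENNReal.ofReal (D^(-m))))^2 := by
    refine le_trans hL (le_of_eq ?_)
    rw [hDmrw, hKcdef, hKAdef, hCbase]
    ring
  have hRHS : ENNReal.ofReal (CM.norm ν / D ^ m) = σ univ * ENNReal.ofReal (D^(-m)) := by
    have hnorm : CM.norm ν = (σ univ).toReal := rfl
    rw [hnorm, div_eq_mul_inv, ← Real.rpow_neg hD.le,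
      ENNReal.ofReal_mul ENNReal.toReal_nonneg, ENNReal.ofReal_toReal hσu]
  calc gstar2Mix μ m lam s ν g x
      = (∫⁻ t in Ioi (0:ℝ),
          gKer μ m lam (Theta2Mix μ s ν g) t x / ENNReal.ofReal (t^(m+1))) ^ ((1:ℝ)/2) := rfl
    _ ≤ (Cbase * (G * (σ univ * ENNReal.ofReal (D^(-m))))^2) ^ ((1:ℝ)/2) :=
        ENNReal.rpow_le_rpow hfin (by norm_num)
    _ = Cbase ^ ((1:ℝ)/2) * (G * (σ univ * ENNReal.ofReal (D^(-m)))) := by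
        rw [ENNReal.mul_rpow_of_nonneg _ _ (by norm_num : (0:ℝ) ≤ 1/2)]
        congr 1
        rw [← ENNReal.rpow_natCast (G * (σ univ * ENNReal.ofReal (D^(-m)))) 2,
          ← ENNReal.rpow_mul]
        norm_num
    _ = _ := by
        rw [ENNReal.ofReal_toReal (ENNReal.rpow_ne_top_of_nonneg (by norm_num) hCbase_ne),
          hRHS]
        ring
end
end

section
/- Let λ > 4, 0 < α ≤ m(λ−4), let μ be a power bounded measure of order m on ℝⁿ, let s_t be a bilinear Littlewood–Paley kernel with exponent α, let 1 < p₁, p₂ < ∞, and let t₀ > 0. Then there is a constant C (depending on t₀, n, m, α, λ, p₁, p₂, the kernel constant and the power bound constant) such that for all f₁ ∈ L^{p₁}(μ), f₂ ∈ L^{p₂}(μ) and all x, x₀ ∈ ℝⁿ: |g^*_{λ,μ,t₀}(f₁,f₂)(x) − g^*_{λ,μ,t₀}(f₁,f₂)(x₀)| ≤ C |x − x₀| ‖f₁‖_{L^{p₁}(μ)} ‖f₂‖_{L^{p₂}(μ)}; in particular the map x ↦ g^*_{λ,μ,t₀}(f₁,f₂)(x) is Lipschitz continuous on ℝⁿ.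 -/
open MeasureTheory Metric Set
open scoped ENNReal NNReal BigOperators

noncomputable section

variable {n : ℕ}

set_option maxHeartbeats 1000000 in
lemma tail_bound {n : ℕ} (μ : Measure (Rn n)) (m Cμ β : ℝ)
    (hm : 0 < m) (hβ : m < β) (hμ : IsPowerBounded μ m Cμ) :
    ∃ c : ℝ≥0∞, c ≠ ⊤ ∧ ∀ (y : Rn n) (t : ℝ), 0 < t →
      ∫⁻ z, ENNReal.ofReal ((t + dist y z) ^ (-β)) ∂μ
        ≤ c * ENNReal.ofReal (t ^ (m - β)) := by
  have h2 : (0:ℝ) < 2 := by norm_num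
  have hr1 : (2:ℝ) ^ (m - β) < 1 :=
    Real.rpow_lt_one_of_one_lt_of_neg (by norm_num) (by linarith)
  have hr0 : (0:ℝ) < 2 ^ (m - β) := Real.rpow_pos_of_pos h2 _
  refine ⟨ENNReal.ofReal Cμ +
    ENNReal.ofReal (Cμ * 2 ^ m) * (1 - ENNReal.ofReal (2 ^ (m - β)))⁻¹, ?_, ?_⟩
  · refine ENNReal.add_ne_top.2 ⟨ENNReal.ofReal_ne_top, ENNReal.mul_ne_top ENNReal.ofReal_ne_top ?_⟩
    simp only [ne_eq, ENNReal.inv_eq_top, tsub_eq_zero_iff_le]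
    exact fun h => absurd (lt_of_lt_of_le ((ENNReal.ofReal_lt_one).2 hr1) h) (lt_irrefl _)
  intro y t ht
  set A : ℕ → Set (Rn n) := fun j => Nat.casesOn j (ball y t)
    (fun k => ball y (2 ^ (k+1) * t) \ ball y (2 ^ k * t)) with hA
  have hcover : (⋃ j, A j) = univ := by
    ext z
    simp only [mem_iUnion, mem_univ, iff_true]
    rcases lt_or_ge (dist y z) t with h | h
    · exact ⟨0, by simpa [hA, dist_comm] using h⟩
    · have hex : ∃ k : ℕ, dist y z < 2 ^ (k+1) * t := by
        obtain ⟨k, hk⟩ := pow_unbounded_of_one_lt (dist y z / t) (by norm_num : (1:ℝ) < 2)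
        have h1 : dist y z < 2 ^ k * t := (div_lt_iff₀ ht).1 hk
        have h2 : (2:ℝ) ^ k * t ≤ 2 ^ (k+1) * t := by
          have : (2:ℝ) ^ k ≤ 2 ^ (k+1) := by
            have := pow_le_pow_right₀ (by norm_num : (1:ℝ) ≤ 2) (Nat.le_succ k)
            exact this
          nlinarith
        exact ⟨k, lt_of_lt_of_le h1 h2⟩
      classical
      let k := Nat.find hex
      refine ⟨k + 1, ?_⟩
      have hk1 : dist y z < 2 ^ (k+1) * t := Nat.find_spec hex
      have hk2 : 2 ^ k * t ≤ dist y z := by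
        rcases Nat.eq_zero_or_pos k with h0 | hpos
        · simpa [h0] using h
        · have := Nat.find_min hex (m := k - 1) (by omega)
          push_neg at this
          have hke : k - 1 + 1 = k := by omega
          rwa [hke] at this
      exact ⟨by simpa [dist_comm] using hk1, by simpa [dist_comm] using hk2⟩
  set X := ENNReal.ofReal (t ^ (m - β)) with hX
  set r := ENNReal.ofReal ((2:ℝ) ^ (m - β)) with hr
  set B : ℕ → ℝ≥0∞ := fun j => Nat.casesOn j (ENNReal.ofReal Cμ * X)
    (fun k => (ENNReal.ofReal (Cμ * 2 ^ m) * X) * r ^ k) with hB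
  have hterm : ∀ j, ∫⁻ z in A j, ENNReal.ofReal ((t + dist y z) ^ (-β)) ∂μ ≤ B j := by
    intro j
    cases j with
    | zero =>
      calc ∫⁻ z in A 0, ENNReal.ofReal ((t + dist y z) ^ (-β)) ∂μ
          ≤ ∫⁻ _ in A 0, ENNReal.ofReal (t ^ (-β)) ∂μ := by
            refine lintegral_mono fun z => ENNReal.ofReal_le_ofReal ?_
            exact Real.rpow_le_rpow_of_nonpos ht (le_add_of_nonneg_right dist_nonneg)
              (by linarith)
        _ = ENNReal.ofReal (t ^ (-β)) * μ (ball y t) := setLIntegral_const _ _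
        _ ≤ ENNReal.ofReal (t ^ (-β)) * ENNReal.ofReal (Cμ * t ^ m) :=
            mul_le_mul_right (hμ y t ht) _
        _ = ENNReal.ofReal Cμ * X := by
            rw [← ENNReal.ofReal_mul (Real.rpow_nonneg ht.le _), hX,
              ← ENNReal.ofReal_mul' (Real.rpow_nonneg ht.le _)]
            congr 1
            rw [show m - β = m + (-β) by ring, Real.rpow_add ht]
            ring
    | succ k =>
      have hpow : (0:ℝ) < 2 ^ k * t := by positivity
      calc ∫⁻ z in A (k+1), ENNReal.ofReal ((t + dist y z) ^ (-β)) ∂μ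
          ≤ ∫⁻ _ in A (k+1), ENNReal.ofReal ((2 ^ k * t) ^ (-β)) ∂μ := by
            refine setLIntegral_mono measurable_const fun z hz => ENNReal.ofReal_le_ofReal ?_
            have hz' : 2 ^ k * t ≤ dist y z := by
              have := hz.2
              simp only [mem_ball, not_lt] at this
              simpa [dist_comm] using this
            exact Real.rpow_le_rpow_of_nonpos hpow (by linarith) (by linarith)
        _ = ENNReal.ofReal ((2 ^ k * t) ^ (-β)) * μ (A (k+1)) := setLIntegral_const _ _
        _ ≤ ENNReal.ofReal ((2 ^ k * t) ^ (-β)) * ENNReal.ofReal (Cμ * (2 ^ (k+1) * t) ^ m) := by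
            refine mul_le_mul_right (le_trans (measure_mono diff_subset) ?_) _
            exact hμ y _ (by positivity)
        _ = B (k+1) := by
            rw [← ENNReal.ofReal_mul (Real.rpow_nonneg hpow.le _)]
            have hBk : B (k+1) = ENNReal.ofReal
                ((Cμ * 2 ^ m) * (t ^ (m - β) * ((2:ℝ) ^ (m - β)) ^ k)) := by
              simp only [hB, hr, hX]
              rw [← ENNReal.ofReal_pow (Real.rpow_nonneg (by norm_num) _),
                mul_assoc, ← ENNReal.ofReal_mul (Real.rpow_nonneg ht.le _),
                ← ENNReal.ofReal_mul' (by positivity : (0:ℝ) ≤ t ^ (m-β) * ((2:ℝ)^(m-β))^k)]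
            rw [hBk]
            congr 1
            rw [← Real.rpow_natCast (2:ℝ) k, ← Real.rpow_natCast (2:ℝ) (k+1),
              ← Real.rpow_natCast ((2:ℝ)^(m-β)) k,
              ← Real.rpow_mul (by norm_num : (0:ℝ) ≤ 2),
              Real.mul_rpow (Real.rpow_nonneg (by norm_num) _) ht.le,
              Real.mul_rpow (Real.rpow_nonneg (by norm_num) _) ht.le,
              ← Real.rpow_mul (by norm_num : (0:ℝ) ≤ 2),
              ← Real.rpow_mul (by norm_num : (0:ℝ) ≤ 2)]
            have E : ∀ a b c d : ℝ, (2:ℝ)^a * t^b * (Cμ * ((2:ℝ)^c * t^d))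
                = Cμ * ((2:ℝ)^(a+c) * t^(b+d)) := by
              intro a b c d
              rw [Real.rpow_add h2, Real.rpow_add ht]; ring
            rw [E, show Cμ * 2^m * (t^(m-β) * (2:ℝ)^((m-β)*(k:ℝ)))
                = Cμ * ((2:ℝ)^(m + (m-β)*(k:ℝ)) * t^(m-β)) from by
                  rw [Real.rpow_add h2]; ring]
            push_cast
            ring_nf
  calc ∫⁻ z, ENNReal.ofReal ((t + dist y z) ^ (-β)) ∂μ
      = ∫⁻ z in ⋃ j, A j, ENNReal.ofReal ((t + dist y z) ^ (-β)) ∂μ := by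
        rw [hcover, Measure.restrict_univ]
    _ ≤ ∑' j, ∫⁻ z in A j, ENNReal.ofReal ((t + dist y z) ^ (-β)) ∂μ :=
        lintegral_iUnion_le _ _
    _ ≤ ∑' j, B j := ENNReal.tsum_le_tsum hterm
    _ = B 0 + ∑' k, B (k+1) := by rw [tsum_eq_zero_add' ENNReal.summable]
    _ = ENNReal.ofReal Cμ * X + (ENNReal.ofReal (Cμ * 2 ^ m) * X) * (1 - r)⁻¹ := by
        have hs : ∑' k, B (k+1) = (ENNReal.ofReal (Cμ * 2 ^ m) * X) * (1 - r)⁻¹ := by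
          have hb' : ∀ k : ℕ, B (k+1) = (ENNReal.ofReal (Cμ * 2 ^ m) * X) * r ^ k :=
            fun k => rfl
          simp only [hb']
          rw [ENNReal.tsum_mul_left, ENNReal.tsum_geometric]
        rw [hs]
        rfl
    _ = (ENNReal.ofReal Cμ + ENNReal.ofReal (Cμ * 2 ^ m) * (1 - r)⁻¹) * X := by ring

lemma kernel_meas {n : ℕ} (y : Rn n) (t e : ℝ) :
    Measurable fun z : Rn n => ENNReal.ofReal ((t + dist y z) ^ e) :=
  ENNReal.measurable_ofReal.comp ((measurable_const.add (measurable_dist.comp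
    (measurable_const.prodMk measurable_id))).pow_const e)


lemma hoelder_bound {n : ℕ} (μ : Measure (Rn n)) (m α p Cμ : ℝ)
    (hm : 0 < m) (hα : 0 < α) (hp : 1 < p) (hμ : IsPowerBounded μ m Cμ) :
    ∃ c : ℝ≥0∞, c ≠ ⊤ ∧ ∀ (f : Rn n → ℂ), AEStronglyMeasurable f μ →
      ∀ (y : Rn n) (t : ℝ), 0 < t →
      ∫⁻ z, ENNReal.ofReal ((t + dist y z) ^ (-(m + α))) * ‖f z‖₊ ∂μ
        ≤ c * ENNReal.ofReal (t ^ (m / (p / (p - 1)) - (m + α)))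
            * eLpNorm f (ENNReal.ofReal p) μ := by
  have hpq : p.HolderConjugate (p / (p - 1)) := Real.HolderConjugate.conjExponent hp
  set q := p / (p - 1) with hq
  have hq1 : 1 < q := hpq.symm.lt
  have hq0 : 0 < q := lt_trans one_pos hq1
  have hβ : m < (m + α) * q := by nlinarith
  obtain ⟨c0, hc0, hc⟩ := tail_bound μ m Cμ ((m + α) * q) hm hβ hμ
  refine ⟨c0 ^ (1 / q), ENNReal.rpow_ne_top_of_nonneg (by positivity) hc0, ?_⟩
  intro f hf y t ht
  have h1 : ∫⁻ z, ENNReal.ofReal ((t + dist y z) ^ (-(m + α))) * ‖f z‖₊ ∂μ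
      ≤ (∫⁻ z, ENNReal.ofReal ((t + dist y z) ^ (-(m + α))) ^ q ∂μ) ^ (1 / q)
        * (∫⁻ z, (‖f z‖₊ : ℝ≥0∞) ^ p ∂μ) ^ (1 / p) := by
    have := ENNReal.lintegral_mul_le_Lp_mul_Lq μ hpq.symm
      (f := fun z => ENNReal.ofReal ((t + dist y z) ^ (-(m + α))))
      (g := fun z => (‖f z‖₊ : ℝ≥0∞)) (kernel_meas y t _).aemeasurable hf.enorm
    simpa [Pi.mul_apply] using this
  have h2 : (∫⁻ z, ENNReal.ofReal ((t + dist y z) ^ (-(m + α))) ^ q ∂μ) ^ (1 / q)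
      ≤ c0 ^ (1 / q) * ENNReal.ofReal (t ^ (m / q - (m + α))) := by
    have hpt : ∀ z : Rn n, (0:ℝ) < t + dist y z :=
      fun z => lt_of_lt_of_le ht (le_add_of_nonneg_right dist_nonneg)
    have e1 : ∀ z : Rn n, ENNReal.ofReal ((t + dist y z) ^ (-(m + α))) ^ q
        = ENNReal.ofReal ((t + dist y z) ^ (-((m + α) * q))) := by
      intro z
      rw [ENNReal.ofReal_rpow_of_pos (Real.rpow_pos_of_pos (hpt z) _)]
      congr 1
      rw [show -((m + α) * q) = (-(m + α)) * q by ring, Real.rpow_mul (hpt z).le]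
    calc (∫⁻ z, ENNReal.ofReal ((t + dist y z) ^ (-(m + α))) ^ q ∂μ) ^ (1 / q)
        = (∫⁻ z, ENNReal.ofReal ((t + dist y z) ^ (-((m + α) * q))) ∂μ) ^ (1 / q) := by
          simp_rw [e1]
      _ ≤ (c0 * ENNReal.ofReal (t ^ (m - (m + α) * q))) ^ (1 / q) :=
          ENNReal.rpow_le_rpow (hc y t ht) (by positivity)
      _ = c0 ^ (1 / q) * ENNReal.ofReal (t ^ (m / q - (m + α))) := by
          rw [ENNReal.mul_rpow_of_nonneg _ _ (by positivity),
            ENNReal.ofReal_rpow_of_pos (Real.rpow_pos_of_pos ht _),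
            ← Real.rpow_mul ht.le]
          congr 2
          field_simp
  have h3 : (∫⁻ z, (‖f z‖₊ : ℝ≥0∞) ^ p ∂μ) ^ (1 / p) = eLpNorm f (ENNReal.ofReal p) μ := by
    rw [eLpNorm_eq_lintegral_rpow_enorm_toReal (by simp [ENNReal.ofReal_pos]; linarith)
      ENNReal.ofReal_ne_top, ENNReal.toReal_ofReal (by linarith)]
    rfl
  calc ∫⁻ z, ENNReal.ofReal ((t + dist y z) ^ (-(m + α))) * ‖f z‖₊ ∂μ
      ≤ (∫⁻ z, ENNReal.ofReal ((t + dist y z) ^ (-(m + α))) ^ q ∂μ) ^ (1 / q)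
        * (∫⁻ z, (‖f z‖₊ : ℝ≥0∞) ^ p ∂μ) ^ (1 / p) := h1
    _ ≤ (c0 ^ (1 / q) * ENNReal.ofReal (t ^ (m / q - (m + α))))
        * eLpNorm f (ENNReal.ofReal p) μ := by rw [h3]; exact mul_le_mul_left h2 _

lemma weight_bound {n : ℕ} (μ : Measure (Rn n)) (m lam Cμ : ℝ)
    (hm : 0 < m) (hlam : 1 < lam) (hμ : IsPowerBounded μ m Cμ) :
    ∃ c : ℝ≥0∞, c ≠ ⊤ ∧ ∀ (x : Rn n) (t : ℝ), 0 < t →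
      ∫⁻ y, ENNReal.ofReal ((t / (t + dist x y)) ^ (m * lam)) ∂μ
        ≤ c * ENNReal.ofReal (t ^ m) := by
  have hml : m < m * lam := by nlinarith
  obtain ⟨c0, hc0, hc⟩ := tail_bound μ m Cμ (m * lam) hm hml hμ
  refine ⟨c0, hc0, ?_⟩
  intro x t ht
  have hsplit : ∀ y : Rn n, ENNReal.ofReal ((t / (t + dist x y)) ^ (m * lam))
      = ENNReal.ofReal (t ^ (m * lam)) * ENNReal.ofReal ((t + dist x y) ^ (-(m * lam))) := by
    intro y
    have hpt : (0:ℝ) < t + dist x y := lt_of_lt_of_le ht (le_add_of_nonneg_right dist_nonneg)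
    rw [Real.div_rpow ht.le hpt.le, Real.rpow_neg hpt.le, div_eq_mul_inv,
      ENNReal.ofReal_mul (Real.rpow_nonneg ht.le _)]
  calc ∫⁻ y, ENNReal.ofReal ((t / (t + dist x y)) ^ (m * lam)) ∂μ
      = ENNReal.ofReal (t ^ (m * lam))
          * ∫⁻ y, ENNReal.ofReal ((t + dist x y) ^ (-(m * lam))) ∂μ := by
        simp_rw [hsplit]
        exact lintegral_const_mul' _ _ ENNReal.ofReal_ne_top
    _ ≤ ENNReal.ofReal (t ^ (m * lam)) * (c0 * ENNReal.ofReal (t ^ (m - m * lam))) :=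
        mul_le_mul_right (hc x t ht) _
    _ = c0 * ENNReal.ofReal (t ^ m) := by
        rw [show ENNReal.ofReal (t ^ (m * lam)) * (c0 * ENNReal.ofReal (t ^ (m - m * lam)))
            = c0 * (ENNReal.ofReal (t ^ (m * lam)) * ENNReal.ofReal (t ^ (m - m * lam))) from by
            ring,
          ← ENNReal.ofReal_mul (Real.rpow_nonneg ht.le _), ← Real.rpow_add ht]
        ring_nf

set_option maxHeartbeats 1000000 in
lemma theta_bound {n : ℕ} (μ : Measure (Rn n)) (m lam α Cμ A p₁ p₂ : ℝ)
    (s : ℝ → Rn n → Rn n → Rn n → ℂ)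
    (hm : 0 < m) (hα : 0 < α) (hp₁ : 1 < p₁) (hp₂ : 1 < p₂)
    (hμ : IsPowerBounded μ m Cμ) (hker : IsLPKernel2 m α A s) :
    ∃ c : ℝ≥0∞, c ≠ ⊤ ∧ ∀ (f₁ f₂ : Rn n → ℂ),
      AEStronglyMeasurable f₁ μ → AEStronglyMeasurable f₂ μ →
      ∀ (t : ℝ) (y : Rn n), 0 < t →
      (‖Theta2 μ s f₁ f₂ t y‖₊ : ℝ≥0∞)
        ≤ c * ENNReal.ofReal (t ^ (-(m / p₁ + m / p₂)))
            * eLpNorm f₁ (ENNReal.ofReal p₁) μ * eLpNorm f₂ (ENNReal.ofReal p₂) μ := by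
  obtain ⟨c₁, hc₁, h₁⟩ := hoelder_bound μ m α p₁ Cμ hm hα hp₁ hμ
  obtain ⟨c₂, hc₂, h₂⟩ := hoelder_bound μ m α p₂ Cμ hm hα hp₂ hμ
  set A' := max A 0 with hA'
  have hA'0 : 0 ≤ A' := le_max_right _ _
  refine ⟨ENNReal.ofReal A' * c₁ * c₂,
    ENNReal.mul_ne_top (ENNReal.mul_ne_top ENNReal.ofReal_ne_top hc₁) hc₂, ?_⟩
  intro f₁ f₂ hf₁ hf₂ t y ht
  set e₁ := m / (p₁ / (p₁ - 1)) - (m + α) with he₁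
  set e₂ := m / (p₂ / (p₂ - 1)) - (m + α) with he₂
  set N₁ := eLpNorm f₁ (ENNReal.ofReal p₁) μ with hN₁
  set N₂ := eLpNorm f₂ (ENNReal.ofReal p₂) μ with hN₂
  set K : Rn n → ℝ≥0∞ := fun z => ENNReal.ofReal ((t + dist y z) ^ (-(m + α))) with hK
  set CC : Rn n → ℝ≥0∞ := fun z₁ => ENNReal.ofReal (A' * t ^ (2*α)) * K z₁ * ‖f₁ z₁‖₊ with hCC
  have hsb : ∀ z₁ z₂ : Rn n, (‖s t y z₁ z₂ * f₁ z₁ * f₂ z₂‖₊ : ℝ≥0∞)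
      ≤ CC z₁ * (K z₂ * ‖f₂ z₂‖₊) := by
    intro z₁ z₂
    have hb : ‖s t y z₁ z₂‖ ≤ A' * t ^ (2*α) * (t + dist y z₁) ^ (-(m + α))
        * (t + dist y z₂) ^ (-(m + α)) := by
      refine (hker.size t y z₁ z₂ ht).trans ?_
      have h1 : (0:ℝ) ≤ t ^ (2*α) := Real.rpow_nonneg ht.le _
      have h2 : (0:ℝ) ≤ (t + dist y z₁) ^ (-(m + α)) := Real.rpow_nonneg (by positivity) _
      have h3 : (0:ℝ) ≤ (t + dist y z₂) ^ (-(m + α)) := Real.rpow_nonneg (by positivity) _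
      exact mul_le_mul_of_nonneg_right (mul_le_mul_of_nonneg_right
        (mul_le_mul_of_nonneg_right (le_max_left A 0) h1) h2) h3
    have hco : (‖s t y z₁ z₂‖₊ : ℝ≥0∞)
        ≤ ENNReal.ofReal (A' * t ^ (2*α)) * K z₁ * K z₂ := by
      rw [← enorm_eq_nnnorm, ← ofReal_norm, hK]
      have h2 : (0:ℝ) ≤ (t + dist y z₁) ^ (-(m + α)) := Real.rpow_nonneg (by positivity) _
      rw [← ENNReal.ofReal_mul (by positivity), ← ENNReal.ofReal_mul (by positivity)]
      exact ENNReal.ofReal_le_ofReal (by rw [mul_assoc] at hb ⊢; exact hb.trans (le_of_eq (by ring)))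
    calc (‖s t y z₁ z₂ * f₁ z₁ * f₂ z₂‖₊ : ℝ≥0∞)
        = (‖s t y z₁ z₂‖₊ : ℝ≥0∞) * ‖f₁ z₁‖₊ * ‖f₂ z₂‖₊ := by
          rw [nnnorm_mul, nnnorm_mul]; push_cast; ring
      _ ≤ (ENNReal.ofReal (A' * t ^ (2*α)) * K z₁ * K z₂) * ‖f₁ z₁‖₊ * ‖f₂ z₂‖₊ := by
          exact mul_le_mul_left (mul_le_mul_left hco _) _
      _ = CC z₁ * (K z₂ * ‖f₂ z₂‖₊) := by rw [hCC]; ring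
  have hCCne : ∀ z₁, CC z₁ ≠ ⊤ := fun z₁ =>
    ENNReal.mul_ne_top (ENNReal.mul_ne_top ENNReal.ofReal_ne_top ENNReal.ofReal_ne_top)
      ENNReal.coe_ne_top
  have hCCmeas : AEMeasurable CC μ := by
    exact ((measurable_const.mul (kernel_meas y t _)).aemeasurable.mul hf₁.enorm)
  calc (‖Theta2 μ s f₁ f₂ t y‖₊ : ℝ≥0∞)
      ≤ ∫⁻ z₁, ‖∫ z₂, s t y z₁ z₂ * f₁ z₁ * f₂ z₂ ∂μ‖₊ ∂μ :=
        enorm_integral_le_lintegral_enorm _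
    _ ≤ ∫⁻ z₁, ∫⁻ z₂, (‖s t y z₁ z₂ * f₁ z₁ * f₂ z₂‖₊ : ℝ≥0∞) ∂μ ∂μ :=
        lintegral_mono fun z₁ => enorm_integral_le_lintegral_enorm _
    _ ≤ ∫⁻ z₁, ∫⁻ z₂, CC z₁ * (K z₂ * ‖f₂ z₂‖₊) ∂μ ∂μ :=
        lintegral_mono fun z₁ => lintegral_mono fun z₂ => hsb z₁ z₂
    _ = ∫⁻ z₁, CC z₁ * ∫⁻ z₂, K z₂ * ‖f₂ z₂‖₊ ∂μ ∂μ := by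
        refine lintegral_congr fun z₁ => ?_
        exact lintegral_const_mul' _ _ (hCCne z₁)
    _ ≤ ∫⁻ z₁, CC z₁ * (c₂ * ENNReal.ofReal (t ^ e₂) * N₂) ∂μ :=
        lintegral_mono fun z₁ => mul_le_mul_right (h₂ f₂ hf₂ y t ht) _
    _ = (∫⁻ z₁, CC z₁ ∂μ) * (c₂ * ENNReal.ofReal (t ^ e₂) * N₂) :=
        lintegral_mul_const'' _ hCCmeas
    _ = (ENNReal.ofReal (A' * t ^ (2*α)) * ∫⁻ z₁, K z₁ * ‖f₁ z₁‖₊ ∂μ)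
          * (c₂ * ENNReal.ofReal (t ^ e₂) * N₂) := by
        congr 1
        rw [← lintegral_const_mul' _ _ (ENNReal.ofReal_ne_top :
          ENNReal.ofReal (A' * t ^ (2*α)) ≠ ⊤)]
        exact lintegral_congr fun z₁ => by rw [hCC]; ring
    _ ≤ (ENNReal.ofReal (A' * t ^ (2*α)) * (c₁ * ENNReal.ofReal (t ^ e₁) * N₁))
          * (c₂ * ENNReal.ofReal (t ^ e₂) * N₂) := by
        exact mul_le_mul_left (mul_le_mul_right (h₁ f₁ hf₁ y t ht) _) _
    _ = ENNReal.ofReal A' * c₁ * c₂ * ENNReal.ofReal (t ^ (-(m / p₁ + m / p₂))) * N₁ * N₂ := by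
        have hexp : -(m / p₁ + m / p₂) = 2*α + e₁ + e₂ := by
          rw [he₁, he₂]
          have h1 : p₁ - 1 ≠ 0 := by linarith
          have h2 : p₂ - 1 ≠ 0 := by linarith
          have h3 : p₁ ≠ 0 := by linarith
          have h4 : p₂ ≠ 0 := by linarith
          field_simp
          ring
        have hsplit : ENNReal.ofReal (t ^ (-(m / p₁ + m / p₂)))
            = ENNReal.ofReal (t^(2*α)) * ENNReal.ofReal (t^e₁) * ENNReal.ofReal (t^e₂) := by
          rw [hexp, Real.rpow_add ht, Real.rpow_add ht,
            ENNReal.ofReal_mul (by positivity), ENNReal.ofReal_mul (by positivity)]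
        rw [ENNReal.ofReal_mul hA'0, hsplit]
        ring

lemma exp_aux {v : ℝ} (hv : 0 ≤ v) : Real.exp v ≤ 1 + v * Real.exp v := by
  have h1 : -v + 1 ≤ Real.exp (-v) := Real.add_one_le_exp (-v)
  have h2 : Real.exp (-v) * Real.exp v = 1 := by
    rw [← Real.exp_add]; simp
  nlinarith [mul_le_mul_of_nonneg_right h1 (Real.exp_pos v).le, Real.exp_pos v]


set_option maxHeartbeats 2000000 in
/-- continuity estimate from Lemma 3.2: the truncated `g`-function is
Lipschitz, `|g^*_{λ,μ,t₀}(f₁,f₂)(x) - g^*_{λ,μ,t₀}(f₁,f₂)(x₀)| ≤ C|x-x₀| ‖f₁‖_{p₁}‖f₂‖_{p₂}`;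
in particular it is continuous. -/
theorem truncated_lipschitz (n : ℕ) (m lam α Cμ A p₁ p₂ t₀ : ℝ)
    (μ : Measure (Rn n)) (s : ℝ → Rn n → Rn n → Rn n → ℂ)
    (hn : 1 ≤ n) (hm : 0 < m) (hlam : 4 < lam) (hα : 0 < α) (hα' : α ≤ m * (lam - 4))
    (hp₁ : 1 < p₁) (hp₂ : 1 < p₂) (ht₀ : 0 < t₀)
    (hμ : IsPowerBounded μ m Cμ) (hker : IsLPKernel2 m α A s) :
    ∃ C : ℝ, 0 ≤ C ∧ ∀ f₁ f₂ : Rn n → ℂ,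
      MemLp f₁ (ENNReal.ofReal p₁) μ → MemLp f₂ (ENNReal.ofReal p₂) μ →
      (∀ x x₀ : Rn n,
        gstar2T μ m lam s f₁ f₂ t₀ x
          ≤ gstar2T μ m lam s f₁ f₂ t₀ x₀ +
              ENNReal.ofReal (C * dist x x₀) *
                eLpNorm f₁ (ENNReal.ofReal p₁) μ * eLpNorm f₂ (ENNReal.ofReal p₂) μ) ∧
      Continuous (fun x => gstar2T μ m lam s f₁ f₂ t₀ x) := by
  have hp₁0 : 0 < p₁ := by linarith
  have hp₂0 : 0 < p₂ := by linarith
  have hlam1 : 1 < lam := by linarith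
  have hml0 : 0 ≤ m * lam := by nlinarith
  obtain ⟨cW, hcW, hW⟩ := weight_bound μ m lam Cμ hm hlam1 hμ
  obtain ⟨cΘ, hcΘ, hΘ⟩ := theta_bound μ m lam α Cμ A p₁ p₂ s hm hα hp₁ hp₂ hμ hker
  set β : ℝ := m / p₁ + m / p₂ with hβdef
  have hβ0 : 0 < β := add_pos (div_pos hm hp₁0) (div_pos hm hp₂0)
  set J : ℝ := ∫ t in Ioi t₀, t ^ (-1 - 2*β) with hJ
  have hJint : IntegrableOn (fun t : ℝ => t ^ (-1 - 2*β)) (Ioi t₀) :=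
    integrableOn_Ioi_rpow_of_lt (by linarith) ht₀
  set cG : ℝ≥0∞ := (cΘ^2 * cW * ENNReal.ofReal J) ^ ((1:ℝ)/2) with hcG
  have hcGne : cG ≠ ⊤ :=
    ENNReal.rpow_ne_top_of_nonneg (by norm_num)
      (ENNReal.mul_ne_top (ENNReal.mul_ne_top (ENNReal.pow_ne_top hcΘ) hcW)
        ENNReal.ofReal_ne_top)
  set cGr := cG.toReal with hcGr
  have hcGr0 : 0 ≤ cGr := ENNReal.toReal_nonneg
  set γ : ℝ := m * lam / 2 with hγ
  have hγ0 : 0 < γ := by rw [hγ]; positivity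
  set CL : ℝ := (γ * Real.exp γ + 1) * cGr / t₀ with hCL
  have hCL0 : 0 ≤ CL := by
    rw [hCL]
    have := Real.exp_pos γ
    positivity
  refine ⟨CL, hCL0, ?_⟩
  intro f₁ f₂ hf₁ hf₂
  set N₁ := eLpNorm f₁ (ENNReal.ofReal p₁) μ with hN₁def
  set N₂ := eLpNorm f₂ (ENNReal.ofReal p₂) μ with hN₂def
  have hN₁ : N₁ ≠ ⊤ := hf₁.2.ne
  have hN₂ : N₂ ≠ ⊤ := hf₂.2.ne
  set F := N₁ * N₂ with hF
  have hFne : F ≠ ⊤ := ENNReal.mul_ne_top hN₁ hN₂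
  set g : Rn n → ℝ≥0∞ := fun x => gstar2T μ m lam s f₁ f₂ t₀ x with hg
  -- uniform bound
  have hunif : ∀ x, g x ≤ cG * F := by
    intro x
    have hCfin : cΘ^2 * F^2 * ENNReal.ofReal (2 : ℝ) ≠ ⊤ := by
      exact ENNReal.mul_ne_top (ENNReal.mul_ne_top (ENNReal.pow_ne_top hcΘ)
        (ENNReal.pow_ne_top hFne)) ENNReal.ofReal_ne_top
    have hkb : ∀ t ∈ Ioi t₀,
        gKer μ m lam (Theta2 μ s f₁ f₂) t x / ENNReal.ofReal (t ^ (m+1))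
          ≤ (cΘ^2 * cW * F^2) * ENNReal.ofReal (t ^ (-1 - 2*β)) := by
      intro t htm
      have ht : 0 < t := ht₀.trans htm
      have hBfin : cΘ^2 * F^2 * ENNReal.ofReal (t ^ (-(2*β))) ≠ ⊤ :=
        ENNReal.mul_ne_top (ENNReal.mul_ne_top (ENNReal.pow_ne_top hcΘ)
          (ENNReal.pow_ne_top hFne)) ENNReal.ofReal_ne_top
      have hB : gKer μ m lam (Theta2 μ s f₁ f₂) t x
          ≤ (cΘ^2 * F^2 * ENNReal.ofReal (t ^ (-(2*β)))) * (cW * ENNReal.ofReal (t ^ m)) := by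
        calc gKer μ m lam (Theta2 μ s f₁ f₂) t x
            ≤ ∫⁻ y, ENNReal.ofReal ((t/(t+dist x y))^(m*lam)) *
                (cΘ^2 * F^2 * ENNReal.ofReal (t ^ (-(2*β)))) ∂μ := by
              refine lintegral_mono fun y => mul_le_mul_right ?_ _
              have h1 := hΘ f₁ f₂ hf₁.1 hf₂.1 t y ht
              calc (‖Theta2 μ s f₁ f₂ t y‖₊ : ℝ≥0∞)^2
                  ≤ (cΘ * ENNReal.ofReal (t ^ (-β)) * N₁ * N₂)^2 :=
                    pow_le_pow_left₀ zero_le h1 2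
                _ = cΘ^2 * F^2 * ENNReal.ofReal (t ^ (-(2*β))) := by
                    rw [show -(2*β) = -β + -β by ring, Real.rpow_add ht,
                      ENNReal.ofReal_mul (Real.rpow_nonneg ht.le _), hF]
                    ring
          _ = (cΘ^2 * F^2 * ENNReal.ofReal (t ^ (-(2*β)))) *
                ∫⁻ y, ENNReal.ofReal ((t/(t+dist x y))^(m*lam)) ∂μ := by
              rw [← lintegral_const_mul' _ _ hBfin]
              exact lintegral_congr fun y => mul_comm _ _
          _ ≤ _ := mul_le_mul_right (hW x t ht) _
      calc gKer μ m lam (Theta2 μ s f₁ f₂) t x / ENNReal.ofReal (t ^ (m+1))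
          ≤ ((cΘ^2 * F^2 * ENNReal.ofReal (t ^ (-(2*β)))) * (cW * ENNReal.ofReal (t ^ m)))
              / ENNReal.ofReal (t ^ (m+1)) := ENNReal.div_le_div_right hB _
        _ = (cΘ^2 * cW * F^2) * ENNReal.ofReal (t ^ (-1 - 2*β)) := by
            rw [show (cΘ^2 * F^2 * ENNReal.ofReal (t ^ (-(2*β)))) * (cW * ENNReal.ofReal (t ^ m))
                = (cΘ^2 * cW * F^2) * (ENNReal.ofReal (t ^ (-(2*β))) * ENNReal.ofReal (t ^ m))
              from by ring,
              ← ENNReal.ofReal_mul (Real.rpow_nonneg ht.le _), ← Real.rpow_add ht,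
              mul_div_assoc, ← ENNReal.ofReal_div_of_pos (Real.rpow_pos_of_pos ht _),
              ← Real.rpow_sub ht, show -(2*β) + m - (m+1) = -1 - 2*β by ring]
    have hS : (∫⁻ t in Ioi t₀, gKer μ m lam (Theta2 μ s f₁ f₂) t x
          / ENNReal.ofReal (t ^ (m+1)))
        ≤ (cΘ^2 * cW * F^2) * ENNReal.ofReal J := by
      calc (∫⁻ t in Ioi t₀, gKer μ m lam (Theta2 μ s f₁ f₂) t x / ENNReal.ofReal (t ^ (m+1)))
          ≤ ∫⁻ t in Ioi t₀, (cΘ^2 * cW * F^2) * ENNReal.ofReal (t ^ (-1 - 2*β)) :=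
            setLIntegral_mono (measurable_const.mul (ENNReal.measurable_ofReal.comp
              (measurable_id.pow_const _))) hkb
        _ = (cΘ^2 * cW * F^2) * ∫⁻ t in Ioi t₀, ENNReal.ofReal (t ^ (-1 - 2*β)) :=
            lintegral_const_mul' _ _ (ENNReal.mul_ne_top (ENNReal.mul_ne_top
              (ENNReal.pow_ne_top hcΘ) hcW) (ENNReal.pow_ne_top hFne))
        _ = (cΘ^2 * cW * F^2) * ENNReal.ofReal J := by
            congr 1
            rw [hJ, ← ofReal_integral_eq_lintegral_ofReal hJint]
            exact (ae_restrict_iff' measurableSet_Ioi).2 (ae_of_all _ fun t htm =>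
              Real.rpow_nonneg (le_of_lt (ht₀.trans htm)) _)
    calc g x = (∫⁻ t in Ioi t₀, gKer μ m lam (Theta2 μ s f₁ f₂) t x
          / ENNReal.ofReal (t ^ (m+1))) ^ ((1:ℝ)/2) := rfl
      _ ≤ ((cΘ^2 * cW * F^2) * ENNReal.ofReal J) ^ ((1:ℝ)/2) :=
          ENNReal.rpow_le_rpow hS (by norm_num)
      _ = cG * F := by
          rw [show cΘ^2 * cW * F^2 * ENNReal.ofReal J
              = (cΘ^2 * cW * ENNReal.ofReal J) * F^2 from by ring,
            ENNReal.mul_rpow_of_nonneg _ _ (by norm_num : (0:ℝ) ≤ 1/2), hcG]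
          congr 1
          rw [← ENNReal.rpow_natCast F 2, ← ENNReal.rpow_mul]
          norm_num
  -- comparison
  have hcomp : ∀ x x₀ : Rn n, g x
      ≤ ENNReal.ofReal ((1 + dist x x₀ / t₀) ^ γ) * g x₀ := by
    intro x x₀
    set D := dist x x₀ with hD
    have hD0 : 0 ≤ D := dist_nonneg
    set u := D / t₀ with hu
    have hu0 : 0 ≤ u := div_nonneg hD0 ht₀.le
    have h1u : (0:ℝ) < 1 + u := by linarith
    have hptw : ∀ t ∈ Ioi t₀,
        gKer μ m lam (Theta2 μ s f₁ f₂) t x / ENNReal.ofReal (t ^ (m+1))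
          ≤ ENNReal.ofReal ((1+u)^(m*lam)) *
            (gKer μ m lam (Theta2 μ s f₁ f₂) t x₀ / ENNReal.ofReal (t ^ (m+1))) := by
      intro t htm
      have ht : 0 < t := ht₀.trans htm
      have hwp : ∀ y : Rn n, ENNReal.ofReal ((t/(t+dist x y))^(m*lam))
          ≤ ENNReal.ofReal ((1+u)^(m*lam)) * ENNReal.ofReal ((t/(t+dist x₀ y))^(m*lam)) := by
        intro y
        have hpx : (0:ℝ) < t + dist x y := by linarith [dist_nonneg (x := x) (y := y)]
        have hpx₀ : (0:ℝ) < t + dist x₀ y := by linarith [dist_nonneg (x := x₀) (y := y)]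
        have hbase : t/(t+dist x y) ≤ ((1+u) * t)/(t+dist x₀ y) := by
          rw [div_le_div_iff₀ hpx hpx₀]
          have htri : dist x₀ y ≤ D + dist x y := by
            have h := dist_triangle x₀ x y
            rw [dist_comm x₀ x] at h
            linarith
          have huD : u * t₀ = D := by
            rw [hu]; field_simp
          have hut : D ≤ u * t := by nlinarith [le_of_lt (mem_Ioi.mp htm)]
          nlinarith [dist_nonneg (x := x) (y := y), ht.le]
        calc ENNReal.ofReal ((t/(t+dist x y))^(m*lam))
            ≤ ENNReal.ofReal ((((1+u) * t)/(t+dist x₀ y))^(m*lam)) :=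
              ENNReal.ofReal_le_ofReal (Real.rpow_le_rpow (by positivity) hbase hml0)
          _ = ENNReal.ofReal ((1+u)^(m*lam)) * ENNReal.ofReal ((t/(t+dist x₀ y))^(m*lam)) := by
              rw [show ((1+u) * t)/(t+dist x₀ y) = (1+u) * (t/(t+dist x₀ y)) from by ring,
                Real.mul_rpow h1u.le (by positivity),
                ENNReal.ofReal_mul (Real.rpow_nonneg h1u.le _)]
      have hmono : gKer μ m lam (Theta2 μ s f₁ f₂) t x
          ≤ ENNReal.ofReal ((1+u)^(m*lam)) * gKer μ m lam (Theta2 μ s f₁ f₂) t x₀ := by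
        calc gKer μ m lam (Theta2 μ s f₁ f₂) t x
            ≤ ∫⁻ y, (ENNReal.ofReal ((1+u)^(m*lam)) *
                ENNReal.ofReal ((t/(t+dist x₀ y))^(m*lam))) *
                (‖Theta2 μ s f₁ f₂ t y‖₊ : ℝ≥0∞)^2 ∂μ :=
              lintegral_mono fun y => mul_le_mul_left (hwp y) _
          _ = ENNReal.ofReal ((1+u)^(m*lam)) * gKer μ m lam (Theta2 μ s f₁ f₂) t x₀ := by
              rw [gKer, ← lintegral_const_mul' _ _ ENNReal.ofReal_ne_top]
              exact lintegral_congr fun y => by ring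
      calc gKer μ m lam (Theta2 μ s f₁ f₂) t x / ENNReal.ofReal (t ^ (m+1))
          ≤ (ENNReal.ofReal ((1+u)^(m*lam)) * gKer μ m lam (Theta2 μ s f₁ f₂) t x₀)
              / ENNReal.ofReal (t ^ (m+1)) := ENNReal.div_le_div_right hmono _
        _ = ENNReal.ofReal ((1+u)^(m*lam)) *
              (gKer μ m lam (Theta2 μ s f₁ f₂) t x₀ / ENNReal.ofReal (t ^ (m+1))) :=
            mul_div_assoc _ _ _
    have hle : (∫⁻ t in Ioi t₀, gKer μ m lam (Theta2 μ s f₁ f₂) t x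
          / ENNReal.ofReal (t ^ (m+1)))
        ≤ ENNReal.ofReal ((1+u)^(m*lam)) * ∫⁻ t in Ioi t₀,
            gKer μ m lam (Theta2 μ s f₁ f₂) t x₀ / ENNReal.ofReal (t ^ (m+1)) := by
      calc (∫⁻ t in Ioi t₀, gKer μ m lam (Theta2 μ s f₁ f₂) t x / ENNReal.ofReal (t ^ (m+1)))
          ≤ ∫⁻ t in Ioi t₀, ENNReal.ofReal ((1+u)^(m*lam)) *
              (gKer μ m lam (Theta2 μ s f₁ f₂) t x₀ / ENNReal.ofReal (t ^ (m+1))) :=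
            lintegral_mono_ae ((ae_restrict_iff' measurableSet_Ioi).2 (ae_of_all _ hptw))
        _ = _ := lintegral_const_mul' _ _ ENNReal.ofReal_ne_top
    calc g x = (∫⁻ t in Ioi t₀, gKer μ m lam (Theta2 μ s f₁ f₂) t x
          / ENNReal.ofReal (t ^ (m+1))) ^ ((1:ℝ)/2) := rfl
      _ ≤ (ENNReal.ofReal ((1+u)^(m*lam)) * ∫⁻ t in Ioi t₀,
            gKer μ m lam (Theta2 μ s f₁ f₂) t x₀ / ENNReal.ofReal (t ^ (m+1))) ^ ((1:ℝ)/2) :=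
          ENNReal.rpow_le_rpow hle (by norm_num)
      _ = ENNReal.ofReal ((1+u)^γ) * g x₀ := by
          rw [ENNReal.mul_rpow_of_nonneg _ _ (by norm_num : (0:ℝ) ≤ 1/2),
            ENNReal.ofReal_rpow_of_pos (Real.rpow_pos_of_pos h1u _),
            ← Real.rpow_mul h1u.le, show m*lam*(1/2 : ℝ) = γ from by rw [hγ]; ring]
          rfl
  -- main inequality
  have hineq : ∀ x x₀ : Rn n, g x ≤ g x₀ + ENNReal.ofReal (CL * dist x x₀) * N₁ * N₂ := by
    intro x x₀
    set D := dist x x₀ with hD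
    have hD0 : 0 ≤ D := dist_nonneg
    set u := D / t₀ with hu
    have hu0 : 0 ≤ u := div_nonneg hD0 ht₀.le
    have hexpos := Real.exp_pos γ
    rcases le_or_gt u 1 with hu1 | hu1
    · have hkey : (1+u)^γ ≤ 1 + (γ * Real.exp γ) * u := by
        have h1 : (1+u)^γ ≤ Real.exp u ^ γ :=
          Real.rpow_le_rpow (by linarith) (by linarith [Real.add_one_le_exp u]) hγ0.le
        have h2 : Real.exp u ^ γ = Real.exp (u * γ) := (Real.exp_mul u γ).symm
        have h3 : Real.exp (u*γ) ≤ 1 + (u*γ) * Real.exp (u*γ) :=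
          exp_aux (mul_nonneg hu0 hγ0.le)
        have h4 : Real.exp (u*γ) ≤ Real.exp γ := Real.exp_le_exp.2 (by nlinarith)
        nlinarith [mul_nonneg hu0 hγ0.le]
      calc g x ≤ ENNReal.ofReal ((1+u)^γ) * g x₀ := hcomp x x₀
        _ ≤ ENNReal.ofReal (1 + (γ * Real.exp γ) * u) * g x₀ :=
            mul_le_mul_left (ENNReal.ofReal_le_ofReal hkey) _
        _ = g x₀ + ENNReal.ofReal ((γ * Real.exp γ) * u) * g x₀ := by
            rw [ENNReal.ofReal_add (by norm_num) (by positivity), ENNReal.ofReal_one,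
              add_mul, one_mul]
        _ ≤ g x₀ + ENNReal.ofReal (CL * D) * N₁ * N₂ := by
            refine add_le_add_right ?_ _
            rw [mul_assoc (ENNReal.ofReal (CL * D)) N₁ N₂, ← hF]
            calc ENNReal.ofReal ((γ * Real.exp γ) * u) * g x₀
                ≤ ENNReal.ofReal ((γ * Real.exp γ) * u) * (cG * F) :=
                  mul_le_mul_right (hunif x₀) _
              _ = (ENNReal.ofReal ((γ * Real.exp γ) * u) * cG) * F := (mul_assoc _ _ _).symm
              _ ≤ ENNReal.ofReal (CL * D) * F := by
                  refine mul_le_mul_left ?_ _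
                  rw [show cG = ENNReal.ofReal cGr from (ENNReal.ofReal_toReal hcGne).symm,
                    ← ENNReal.ofReal_mul (by positivity)]
                  refine ENNReal.ofReal_le_ofReal ?_
                  rw [show (γ * Real.exp γ) * u * cGr
                      = (γ * Real.exp γ * cGr * D) / t₀ from by rw [hu]; ring,
                    show CL * D = ((γ * Real.exp γ + 1) * cGr * D) / t₀ from by
                      rw [hCL]; ring]
                  exact (div_le_div_iff_of_pos_right ht₀).2 (by nlinarith [mul_nonneg hcGr0 hD0])
    · calc g x ≤ cG * F := hunif x
        _ ≤ ENNReal.ofReal (CL * D) * F := by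
            refine mul_le_mul_left ?_ _
            rw [show cG = ENNReal.ofReal cGr from (ENNReal.ofReal_toReal hcGne).symm]
            refine ENNReal.ofReal_le_ofReal ?_
            have hDu : D = u * t₀ := by rw [hu]; field_simp
            rw [hCL, hDu]
            rw [div_mul_eq_mul_div]
            rw [le_div_iff₀ ht₀]
            nlinarith [mul_nonneg hcGr0 (mul_nonneg (mul_nonneg hγ0.le hexpos.le) hu0),
              mul_nonneg hcGr0 (by linarith : (0:ℝ) ≤ u - 1)]
        _ ≤ g x₀ + ENNReal.ofReal (CL * D) * F := le_add_self
        _ = g x₀ + ENNReal.ofReal (CL * D) * N₁ * N₂ := by rw [hF, mul_assoc]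
  constructor
  · exact hineq
  · have hfin : ∀ x, g x ≠ ⊤ := fun x =>
      ne_top_of_le_ne_top (ENNReal.mul_ne_top hcGne hFne) (hunif x)
    set G : Rn n → ℝ := fun x => (g x).toReal with hGdef
    have hEne : ∀ x x₀ : Rn n, ENNReal.ofReal (CL * dist x x₀) * N₁ * N₂ ≠ ⊤ :=
      fun x x₀ => ENNReal.mul_ne_top (ENNReal.mul_ne_top ENNReal.ofReal_ne_top hN₁) hN₂
    have hsub : ∀ x x₀ : Rn n, G x - G x₀ ≤ CL * (N₁.toReal * N₂.toReal) * dist x x₀ := by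
      intro x x₀
      have h2 := ENNReal.toReal_mono (ENNReal.add_ne_top.2 ⟨hfin x₀, hEne x x₀⟩) (hineq x x₀)
      rw [ENNReal.toReal_add (hfin x₀) (hEne x x₀), ENNReal.toReal_mul, ENNReal.toReal_mul,
        ENNReal.toReal_ofReal (mul_nonneg hCL0 dist_nonneg)] at h2
      have h3 : CL * dist x x₀ * N₁.toReal * N₂.toReal
          = CL * (N₁.toReal * N₂.toReal) * dist x x₀ := by ring
      rw [h3] at h2
      linarith
    have hlip : LipschitzWith (Real.toNNReal (CL * (N₁.toReal * N₂.toReal))) G := by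
      refine LipschitzWith.of_dist_le_mul fun x y => ?_
      rw [Real.dist_eq, abs_sub_le_iff]
      have hc : CL * (N₁.toReal * N₂.toReal) * dist x y
          ≤ ↑(Real.toNNReal (CL * (N₁.toReal * N₂.toReal))) * dist x y := by
        refine mul_le_mul_of_nonneg_right ?_ dist_nonneg
        rw [Real.coe_toNNReal']
        exact le_max_left _ _
      exact ⟨(hsub x y).trans hc,
        le_trans (by rw [dist_comm x y] at hc ⊢; exact hsub y x) hc⟩
    have hgeq : g = fun x => ENNReal.ofReal (G x) :=
      funext fun x => (ENNReal.ofReal_toReal (hfin x)).symm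
    show Continuous g
    rw [hgeq]
    exact ENNReal.continuous_ofReal.comp hlip.continuous
end
end
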